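/- arXiv:1207.6447 — 7 statements merged into one kernel-verified Lean document; each statement's English description precedes it below -/
import Mathlib

section
/- If G is a simple graph on n vertices such that d(u)+d(v) ≥ n-1 for every pair of nonadjacent vertices u, v, then G contains a Hamiltonian path. -/
/-!
Add a vertex adjacent to every vertex of `G` (the cone over `G`). The hypothesis
`d(u) + d(v) ≥ n - 1` becomes Ore's condition `d(u) + d(v) ≥ n + 1` on the `n + 1` vertices of
the cone, and a Hamiltonian cycle of the cone, opened at the new vertex, is a Hamiltonian path
of `G`.

Ore's theorem is proved by the Bondy–Chvátal closure argument, by descending induction on `G`.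
If `G` is complete, any enumeration of the vertices is a Hamiltonian cycle. Otherwise add an edge
`uv` between nonadjacent vertices; a Hamiltonian cycle of `G + uv` either avoids `uv`, or gives a
Hamiltonian path `u = x₀, …, x_{n-1} = v` of `G`. Since `d(u) + d(v) ≥ n`, pigeonhole gives an
`i` with `xᵢ ~ v` and `u ~ x_{i+1}`, and `x₀ … xᵢ x_{n-1} … x_{i+1}` is a Hamiltonian cycle
of `G`.
-/

open Finset

lemma Cycle.exists_eq_coe_cons {α : Type*} {c : Cycle α} {a : α} (h : a ∈ c) :
    ∃ l : List α, c = ↑(a :: l) := by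
  induction c using Quotient.inductionOn' with
  | h m =>
    obtain ⟨s, t, rfl⟩ := List.append_of_mem (Cycle.mem_coe_iff.1 h)
    exact ⟨t ++ s, Cycle.coe_eq_coe.2 List.isRotated_append⟩

lemma List.eq_singleton_of_head_eq_getLast {α : Type*} {l : List α} (hl : l.Nodup)
    (hne : l ≠ []) (h : l.head hne = l.getLast hne) : l = [l.head hne] := by
  obtain ⟨a, l, rfl⟩ := List.exists_cons_of_ne_nil hne
  cases l with
  | nil => rfl
  | cons b l =>
    simp only [List.head_cons, List.getLast_cons_cons] at h
    exact absurd (h ▸ List.getLast_mem (List.cons_ne_nil b l)) (List.nodup_cons.1 hl).1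

lemma List.exists_eq_map_some {α : Type*} {l : List (Option α)} (h : none ∉ l) :
    ∃ m : List α, l = m.map some := by
  induction l with
  | nil => exact ⟨[], rfl⟩
  | cons x l ih =>
    obtain ⟨a, rfl⟩ := Option.ne_none_iff_exists'.1 fun hx => h (hx ▸ List.mem_cons_self)
    obtain ⟨m, rfl⟩ := ih fun hn => h (List.mem_cons_of_mem _ hn)
    exact ⟨a :: m, rfl⟩

namespace SimpleGraph

variable {V : Type*} (G : SimpleGraph V)

def IsHamPath (l : List V) : Prop :=
  l.Nodup ∧ (∀ v, v ∈ l) ∧ l.IsChain G.Adj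

/-- On two vertices this accepts the single edge traversed there and back. -/
def IsHamCycle (c : Cycle V) : Prop :=
  c.Nodup ∧ (∀ v, v ∈ c) ∧ c.Chain G.Adj

def OreCondition [Fintype V] [DecidableRel G.Adj] (k : ℕ) : Prop :=
  ∀ u v, u ≠ v → ¬G.Adj u v → k ≤ G.degree u + G.degree v

variable {G}

lemma IsHamPath.length_eq_card [Fintype V] {l : List V} (hl : G.IsHamPath l) :
    l.length = Fintype.card V := by
  classical
  rw [← List.toFinset_card_of_nodup hl.1, ← card_univ]
  congr
  ext v
  simp [hl.2.1 v]

theorem IsHamPath.exists_adj_getLast_adj_head [Fintype V] [DecidableRel G.Adj] {L : List V}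
    (hL : G.IsHamPath L) (hne : L ≠ [])
    (hdeg : Fintype.card V ≤ G.degree (L.head hne) + G.degree (L.getLast hne)) :
    ∃ i, ∃ h : i + 1 < L.length,
      G.Adj L[i] (L.getLast hne) ∧ G.Adj (L.head hne) L[i + 1] := by
  classical
  have hidx : Function.Injective L.idxOf := fun x y h => (List.idxOf_inj (hL.2.1 x)).1 h
  have hlt (w : V) : L.idxOf w < L.length := List.idxOf_lt_length_of_mem (hL.2.1 w)
  have hget (w : V) : L[L.idxOf w]'(hlt w) = w := List.getElem_idxOf (hlt w)
  -- Pigeonhole between the positions of the neighbours of the head and the positions just after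
  -- the neighbours of the last vertex: `d(head) + d(last)` numbers in `[1, n)`.
  have hA : (G.neighborFinset (L.head hne)).image L.idxOf ⊆ Ico 1 L.length := by
    simp only [subset_iff, mem_image, mem_neighborFinset, mem_Ico]
    rintro _ ⟨x, hx, rfl⟩
    refine ⟨Nat.pos_of_ne_zero fun h0 => hx.ne ?_, hlt x⟩
    rw [List.head_eq_getElem, ← hget x]
    simp [h0]
  have hB : (G.neighborFinset (L.getLast hne)).image (L.idxOf · + 1) ⊆ Ico 1 L.length := by
    simp only [subset_iff, mem_image, mem_neighborFinset, mem_Ico]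
    rintro _ ⟨y, hy, rfl⟩
    have hy_ne : L.idxOf y ≠ L.length - 1 := fun h => hy.ne <| by
      rw [List.getLast_eq_getElem, ← hget y]
      simp [h]
    have := hlt y
    omega
  obtain ⟨j, hj⟩ := inter_nonempty_of_card_lt_card_add_card hA hB <| by
    rw [card_image_of_injective _ hidx,
      card_image_of_injective _ fun x y h => hidx (Nat.succ_injective h),
      card_neighborFinset_eq_degree, card_neighborFinset_eq_degree, Nat.card_Ico,
      hL.length_eq_card]
    have := Fintype.card_pos_iff.2 ⟨L.head hne⟩
    omega
  simp only [mem_inter, mem_image, mem_neighborFinset] at hj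
  obtain ⟨⟨x, hx, rfl⟩, y, hy, hyx⟩ := hj
  exact ⟨L.idxOf y, hyx ▸ hlt x, by simpa [hget] using hy.symm, by simpa [hyx, hget] using hx⟩

theorem IsHamPath.isHamCycle {L : List V} (hL : G.IsHamPath L) (hne : L ≠ [])
    (hadj : G.Adj (L.getLast hne) (L.head hne)) : G.IsHamCycle L := by
  obtain ⟨hnd, hall, hchain⟩ := hL
  refine ⟨Cycle.nodup_coe_iff.2 hnd, fun v => Cycle.mem_coe_iff.2 (hall v), ?_⟩
  obtain ⟨a, L, rfl⟩ := List.exists_cons_of_ne_nil hne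
  rw [Cycle.chain_coe_cons, ← List.cons_append]
  exact hchain.append (List.isChain_singleton a)
    (by simpa [List.getLast?_eq_some_getLast hne] using hadj)

theorem IsHamPath.append_reverse {P Q : List V} (h : G.IsHamPath (P ++ Q)) (hP : P ≠ [])
    (hQ : Q ≠ []) (hadj : G.Adj (P.getLast hP) (Q.getLast hQ)) :
    G.IsHamPath (P ++ Q.reverse) := by
  obtain ⟨hnd, hall, hchain⟩ := h
  have hperm : (P ++ Q.reverse).Perm (P ++ Q) := (List.reverse_perm Q).append_left P
  refine ⟨hperm.nodup_iff.2 hnd, fun v => hperm.mem_iff.2 (hall v), ?_⟩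
  refine hchain.left_of_append.append
    (List.isChain_reverse.2 (hchain.right_of_append.imp fun _ _ e => e.symm)) ?_
  simpa [List.getLast?_eq_some_getLast hP, List.getLast?_eq_some_getLast hQ] using hadj

theorem IsHamPath.exists_isHamCycle [Fintype V] [DecidableRel G.Adj] {L : List V}
    (hL : G.IsHamPath L) (hne : L ≠ [])
    (hdeg : Fintype.card V ≤ G.degree (L.head hne) + G.degree (L.getLast hne)) :
    ∃ c, G.IsHamCycle c := by
  obtain ⟨i, hi, hlast, hhead⟩ := hL.exists_adj_getLast_adj_head hne hdeg
  rw [← List.take_append_drop (i + 1) L] at hL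
  have hP : L.take (i + 1) ≠ [] := by simp [hne]
  have hQ : L.drop (i + 1) ≠ [] := by simpa using hi
  -- the cycle `x₀ … xᵢ x_{n-1} … x_{i+1}`
  refine ⟨_, (hL.append_reverse hP hQ ?_).isHamCycle (by simp [hP]) ?_⟩
  · simpa [List.getLast_take, List.getElem?_eq_getElem (Nat.lt_of_succ_lt hi)] using hlast
  · simpa [List.head_append_of_ne_nil hP, List.head_take,
      List.getLast_append_of_ne_nil _ (List.reverse_ne_nil_iff.2 hQ)]
      using hhead.symm

theorem exists_isHamCycle_of_forall_isUniversal [Fintype V] [Nontrivial V] [DecidableRel G.Adj]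
    (hG : ∀ v, G.IsUniversal v) : ∃ c, G.IsHamCycle c := by
  have hL : G.IsHamPath univ.toList :=
    ⟨nodup_toList _, by simp, ((nodup_toList _).imp fun h => hG _ h).isChain⟩
  refine hL.exists_isHamCycle (by simpa using univ_nonempty.ne_empty) ?_
  rw [(degree_eq_card_sub_one _ _).2 (hG _), (degree_eq_card_sub_one _ _).2 (hG _)]
  have := Fintype.one_lt_card (α := V)
  omega

lemma adj_or_eq_of_sup_edge_adj {u v w : V} (h : (G ⊔ edge u v).Adj u w) :
    G.Adj u w ∨ w = v := by
  simp only [sup_adj, edge_adj] at h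
  grind

lemma isChain_of_isChain_sup_edge {u v : V} {l : List V} (h : l.IsChain (G ⊔ edge u v).Adj)
    (hu : u ∉ l) : l.IsChain G.Adj :=
  h.imp_of_mem_imp fun a b ha hb hab => by
    simp only [sup_adj, edge_adj] at hab
    grind

lemma degree_eq_zero_of_forall_eq_or_eq [Fintype V] [DecidableRel G.Adj] {u v : V}
    (hnadj : ¬G.Adj u v) (h : ∀ w, w = u ∨ w = v) : G.degree u = 0 := by
  refine Nat.eq_zero_of_not_pos fun hpos => ?_
  obtain ⟨w, hw⟩ := (G.degree_pos_iff_exists_adj u).1 hpos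
  rcases h w with rfl | rfl
  exacts [hw.ne rfl, hnadj hw]

theorem IsHamCycle.exists_isHamCycle_of_sup_edge [Fintype V] [DecidableRel G.Adj] {u v : V}
    {c : Cycle V} (hc : (G ⊔ edge u v).IsHamCycle c) (hnadj : ¬G.Adj u v)
    (hdeg : Fintype.card V ≤ G.degree u + G.degree v) : ∃ c, G.IsHamCycle c := by
  obtain ⟨hnd, hall, hchain⟩ := hc
  obtain ⟨T, rfl⟩ := Cycle.exists_eq_coe_cons (hall u)
  rw [Cycle.nodup_coe_iff, List.nodup_cons] at hnd
  simp only [Cycle.mem_coe_iff] at hall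
  rw [Cycle.chain_coe_cons, ← List.cons_append, List.isChain_append] at hchain
  obtain ⟨hchain, -, hclose⟩ := hchain
  have hT : T ≠ [] := by rintro rfl; exact (hclose u rfl u rfl).ne rfl
  have hTG : T.IsChain G.Adj := isChain_of_isChain_sup_edge hchain.tail hnd.1
  have h1 : G.Adj u (T.head hT) ∨ T.head hT = v :=
    adj_or_eq_of_sup_edge_adj (hchain.rel_head? (by simp [List.head?_eq_some_head hT]))
  have h2 : G.Adj u (T.getLast hT) ∨ T.getLast hT = v := adj_or_eq_of_sup_edge_adj
    (hclose _ (by simp [List.getLast?_cons, List.getLast?_eq_some_getLast hT]) u rfl).symm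
  rcases h1 with h1 | h1
  · have hP : G.IsHamPath (u :: T) := ⟨List.nodup_cons.2 hnd, hall, hTG.cons_of_ne_nil hT h1⟩
    rcases h2 with h2 | h2
    · exact ⟨_, hP.isHamCycle (List.cons_ne_nil u T)
        (by simpa [List.getLast_cons hT] using h2.symm)⟩
    · exact hP.exists_isHamCycle (List.cons_ne_nil u T)
        (by rwa [List.head_cons, List.getLast_cons hT, h2])
  rcases h2 with h2 | h2
  · have hperm : (T ++ [u]).Perm (u :: T) := List.perm_append_singleton u T
    refine IsHamPath.exists_isHamCycle (L := T ++ [u])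
      ⟨hperm.nodup_iff.2 (List.nodup_cons.2 hnd), fun w => hperm.mem_iff.2 (hall w),
        hTG.append (List.isChain_singleton u) ?_⟩ (by simp) ?_
    · simpa [List.getLast?_eq_some_getLast hT] using h2.symm
    · rw [List.head_append_of_ne_nil hT, h1, List.getLast_append_singleton]
      omega
  -- the cycle is `u v u`, so `V = {u, v}`
  have hTv : T = [v] := by
    rw [List.eq_singleton_of_head_eq_getLast hnd.2 hT (h1.trans h2.symm), h1]
  have hcover : ∀ w, w = u ∨ w = v := by simpa [hTv] using hall
  have := degree_eq_zero_of_forall_eq_or_eq hnadj hcover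
  have := degree_eq_zero_of_forall_eq_or_eq (fun h => hnadj h.symm) fun w => (hcover w).symm
  have := Fintype.card_pos_iff.2 ⟨u⟩
  omega

variable (G) in
theorem exists_isHamCycle_of_oreCondition [Fintype V] [Nontrivial V] [DecidableRel G.Adj]
    (h : G.OreCondition (Fintype.card V)) : ∃ c, G.IsHamCycle c := by
  revert ‹DecidableRel G.Adj›
  induction G using WellFoundedGT.induction with
  | _ G ih =>
  intro _ h
  by_cases hG : ∀ v, G.IsUniversal v
  · exact exists_isHamCycle_of_forall_isUniversal hG
  simp only [IsUniversal, not_forall] at hG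
  obtain ⟨u, v, huv, hnadj⟩ := hG
  classical
  have hle : G ≤ G ⊔ edge u v := le_sup_left
  obtain ⟨c, hc⟩ := ih _ (lt_sup_edge G u v huv hnadj) fun a b hab hnab =>
    (h a b hab fun hG => hnab (hle hG)).trans
      (add_le_add (degree_le_of_le hle) (degree_le_of_le hle))
  exact hc.exists_isHamCycle_of_sup_edge hnadj (h u v huv hnadj)

variable (G) in
def cone : SimpleGraph (Option V) where
  Adj
    | some a, some b => G.Adj a b
    | none, none => False
    | _, _ => True
  symm := ⟨by rintro (_ | a) (_ | b) h <;> first | exact h | exact G.adj_symm h⟩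
  loopless := ⟨by rintro (_ | a) h; exacts [h, G.loopless.irrefl a h]⟩

@[simp] lemma cone_adj_some_some {a b : V} : G.cone.Adj (some a) (some b) ↔ G.Adj a b := Iff.rfl

@[simp] lemma cone_adj_none_some (a : V) : G.cone.Adj none (some a) := trivial

@[simp] lemma cone_adj_some_none (a : V) : G.cone.Adj (some a) none := trivial

instance [DecidableRel G.Adj] : DecidableRel G.cone.Adj
  | some a, some b => inferInstanceAs (Decidable (G.Adj a b))
  | none, none => inferInstanceAs (Decidable False)
  | none, some _ | some _, none => inferInstanceAs (Decidable True)

lemma degree_cone_some [Fintype V] [DecidableRel G.Adj] (a : V) :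
    G.cone.degree (some a) = G.degree a + 1 := by
  rw [← card_neighborFinset_eq_degree, ← card_neighborFinset_eq_degree,
    show G.cone.neighborFinset (some a) = ((G.neighborFinset a).map .some).cons none (by simp) by
      ext (_ | b) <;> simp]
  simp

lemma OreCondition.cone [Fintype V] [DecidableRel G.Adj]
    (h : G.OreCondition (Fintype.card V - 1)) : G.cone.OreCondition (Fintype.card (Option V)) := by
  rintro (_ | a) (_ | b) hne hadj
  · exact absurd rfl hne
  · exact absurd (cone_adj_none_some b) hadj
  · exact absurd (cone_adj_some_none a) hadj
  · have := h a b (by simpa using hne) hadj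
    rw [Fintype.card_option, degree_cone_some, degree_cone_some]
    omega

lemma exists_isHamPath_of_isHamCycle_cone {c : Cycle (Option V)} (hc : G.cone.IsHamCycle c) :
    ∃ l, G.IsHamPath l := by
  obtain ⟨hnd, hall, hchain⟩ := hc
  obtain ⟨T, rfl⟩ := Cycle.exists_eq_coe_cons (hall none)
  rw [Cycle.nodup_coe_iff, List.nodup_cons] at hnd
  obtain ⟨l, rfl⟩ := List.exists_eq_map_some hnd.1
  refine ⟨l, hnd.2.of_map, fun v => by simpa using hall (some v), ?_⟩
  rw [Cycle.chain_coe_cons] at hchain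
  exact (List.isChain_map some).1 hchain.tail.left_of_append

theorem IsHamPath.exists_isHamiltonian [DecidableEq V] [Nonempty V] {l : List V}
    (hl : G.IsHamPath l) : ∃ (u v : V) (p : G.Walk u v), p.IsHamiltonian := by
  have hne : l ≠ [] := List.ne_nil_of_mem (hl.2.1 (Classical.arbitrary V))
  refine ⟨_, _, Walk.ofSupport l hne hl.2.2, fun v => ?_⟩
  rw [Walk.support_ofSupport]
  exact List.count_eq_one_of_mem hl.1 (hl.2.1 v)

theorem exists_isHamPath_of_oreCondition [Fintype V] [Nonempty V] [DecidableRel G.Adj]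
    (h : G.OreCondition (Fintype.card V - 1)) : ∃ l, G.IsHamPath l :=
  let ⟨_, hc⟩ := exists_isHamCycle_of_oreCondition G.cone h.cone
  exists_isHamPath_of_isHamCycle_cone hc

end SimpleGraph

/-- Ore: if d(u)+d(v) ≥ n-1 for every pair of nonadjacent vertices, G has a Hamiltonian path. -/
theorem ore_hamiltonian_path (n : ℕ) (hn : 1 ≤ n) (G : SimpleGraph (Fin n))
    [DecidableRel G.Adj]
    (h : ∀ u v : Fin n, u ≠ v → ¬ G.Adj u v → n - 1 ≤ G.degree u + G.degree v) :
    ∃ (u v : Fin n) (p : G.Walk u v), p.IsHamiltonian := by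
  have : Nonempty (Fin n) := ⟨⟨0, hn⟩⟩
  obtain ⟨l, hl⟩ :=
    G.exists_isHamPath_of_oreCondition (by rwa [SimpleGraph.OreCondition, Fintype.card_fin])
  exact hl.exists_isHamiltonian
end

section
/- If G is a simple graph on n vertices such that d(u)+d(v) ≥ n+1 for every pair of nonadjacent vertices u, v, then G is Hamilton-connected, i.e., every two distinct vertices of G are joined by a Hamiltonian path. -/
/-!
Closure argument. If `x, y` are nonadjacent with `d(x) + d(y) > n`, a Hamiltonian `u`–`v` path of
`G + xy` that uses the edge `xy` can be turned into one of `G`: writing it as `… x y …`, the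
neighbours of `x` and the predecessors of neighbours of `y` are two subsets of `V \ {x}` of total
size at least `n`, so some `a ~ x` is followed on the path by some `b ~ y`. Removing the edges
`ab` and `xy`, adding `ax` and `by`, and reversing the segment in between gives the new path. By
induction on the number of missing edges, starting from the complete graph, `G` is
Hamilton-connected.
-/

namespace List

variable {α : Type*} {l P Q : List α} {a b c x y : α}

theorem Nodup.eq_of_pair_infix (hl : l.Nodup) (hb : [a, b] <:+: l) (hc : [a, c] <:+: l) :
    b = c := by
  induction l with
  | nil => simp at hb
  | cons d l ih =>
    rw [nodup_cons] at hl
    rw [infix_cons_iff] at hb hc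
    have hne {e} (he : [a, e] <:+: l) : a ≠ d := fun h => hl.1 (h ▸ he.subset mem_cons_self)
    rcases hb with hb | hb <;> rcases hc with hc | hc
    · cases l <;> simp_all
    · exact absurd (cons_prefix_cons.1 hb).1 (hne hc)
    · exact absurd (cons_prefix_cons.1 hc).1 (hne hb)
    · exact ih hl.2 hb hc

theorem pair_infix_append_cons_cons (h : [a, b] <:+: P ++ x :: y :: Q) (hax : a ≠ x)
    (hay : a ≠ y) (hbx : b ≠ x) : [a, b] <:+: P ∨ [a, b] <:+: Q := by
  induction P with
  | nil =>
    simp only [nil_append, infix_cons_iff, cons_prefix_cons, hax, hay, false_and,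
      false_or] at h
    exact .inr h
  | cons c P ih =>
    rw [cons_append, infix_cons_iff] at h
    rcases h with h | h
    · cases P with
      | nil => simp [hbx] at h
      | cons d P =>
        obtain ⟨rfl, rfl⟩ : a = c ∧ b = d := by simpa using h
        exact .inl ⟨[], P, rfl⟩
    · exact (ih h).imp_left infix_cons

theorem exists_pair_infix_of_mem (hb : b ∈ l) (hhead : l.head? ≠ some b) :
    ∃ a, [a, b] <:+: l := by
  obtain ⟨s, t, rfl⟩ := mem_iff_append.1 hb
  obtain rfl | ⟨s, a, rfl⟩ := eq_nil_or_concat' s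
  · simp at hhead
  · exact ⟨a, s, t, by simp⟩

theorem IsChain.append_reverse_append {R : α → α → Prop} [Std.Symm R] {A B C : List α}
    (hA : A.IsChain R) (hB : B.IsChain R) (hC : C.IsChain R) (hB₀ : B ≠ [])
    (hAB : ∀ a ∈ A.getLast?, ∀ b ∈ B.getLast?, R a b)
    (hBC : ∀ b ∈ B.head?, ∀ c ∈ C.head?, R b c) :
    (A ++ B.reverse ++ C).IsChain R := by
  refine (hA.append (isChain_reverse.2 (hB.imp fun _ _ h => symm h)) ?_).append hC ?_
  · simpa using hAB
  · rwa [getLast?_append_of_ne_nil _ (reverse_ne_nil_iff.2 hB₀), getLast?_reverse]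

end List

namespace SimpleGraph

open Finset

variable {V : Type*} {G : SimpleGraph V} {x y : V}

def IsHamiltonConnected [DecidableEq V] (G : SimpleGraph V) : Prop :=
  ∀ ⦃u v : V⦄, u ≠ v → ∃ p : G.Walk u v, p.IsHamiltonian

theorem isChain_adj_of_isChain_sup_edge {m : List V} (h : m.IsChain (G ⊔ edge x y).Adj)
    (hy : y ∉ m) : m.IsChain G.Adj := by
  refine h.imp_of_mem_imp fun a b ha hb hab => hab.resolve_right fun he => ?_
  obtain ⟨⟨rfl, rfl⟩ | ⟨rfl, rfl⟩, -⟩ := (edge_adj _ _ _ _).1 he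
  exacts [hy hb, hy ha]

theorem Walk.exists_isHamiltonian_of_isChain [DecidableEq V] {u v : V} {l : List V}
    (hc : l.IsChain G.Adj) (hnd : l.Nodup) (hall : ∀ w, w ∈ l) (hu : l.head? = some u)
    (hv : l.getLast? = some v) : ∃ q : G.Walk u v, q.IsHamiltonian := by
  have hne : l ≠ [] := by rintro rfl; simp at hu
  refine ⟨(Walk.ofSupport l hne hc).copy ?_ ?_, fun w => ?_⟩
  · simpa [List.head?_eq_some_head hne] using hu
  · simpa [List.getLast?_eq_some_getLast hne] using hv
  · simpa using List.count_eq_one_of_mem hnd (hall w)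

theorem isHamiltonConnected_of_forall_adj [Fintype V] [DecidableEq V]
    (h : ∀ a b, a ≠ b → G.Adj a b) : G.IsHamiltonConnected := by
  intro u v huv
  have hnd : (u :: ((univ.erase u).erase v).toList ++ [v]).Nodup := by
    simp +contextual [List.nodup_append, huv, nodup_toList]
  refine Walk.exists_isHamiltonian_of_isChain (List.Pairwise.imp (h _ _) hnd).isChain hnd
    (fun w => ?_) (by simp) (by simp [List.getLast?_cons])
  simp only [List.cons_append, List.mem_cons, List.mem_append, mem_toList, mem_erase,
    mem_univ]
  tauto

variable [Fintype V] [DecidableEq V] [DecidableRel G.Adj] {l : List V}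

theorem exists_adj_adj_of_pair_infix (hnd : l.Nodup) (hall : ∀ w, w ∈ l) (hxy : [x, y] <:+: l)
    (hdeg : Fintype.card V < G.degree x + G.degree y) :
    ∃ a b, [a, b] <:+: l ∧ G.Adj x a ∧ G.Adj y b := by
  have hne : l ≠ [] := List.ne_nil_of_mem (hall x)
  set pred := univ.filter fun a => ∃ b, [a, b] <:+: l ∧ G.Adj y b
  have hpred : G.degree y - 1 ≤ #pred := by
    calc G.degree y - 1 ≤ #((G.neighborFinset y).erase (l.head hne)) :=
          pred_card_le_card_erase
      _ ≤ #pred := by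
        refine card_le_card_of_forall_subsingleton (fun b a => [a, b] <:+: l) (fun b hb => ?_)
          fun a _ b₁ hb₁ b₂ hb₂ => hnd.eq_of_pair_infix hb₁.2 hb₂.2
        obtain ⟨hb, hyb⟩ := mem_erase.1 hb
        obtain ⟨a, ha⟩ := List.exists_pair_infix_of_mem (hall b)
          (by simpa [List.head?_eq_some_head hne] using hb.symm)
        exact ⟨a, mem_filter.2 ⟨mem_univ _, b, ha, (mem_neighborFinset _ _ _).1 hyb⟩, ha⟩
  -- the only successor of `x` is `y`, which is not a neighbour of `y`
  have hx : x ∉ pred := by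
    simp only [pred, mem_filter, mem_univ, true_and, not_exists, not_and]
    exact fun b hb hyb => G.irrefl (hnd.eq_of_pair_infix hxy hb ▸ hyb)
  obtain ⟨a, ha⟩ := inter_nonempty_of_card_lt_card_add_card (s := univ.erase x)
    (t := G.neighborFinset x) (u := pred)
    (fun a ha => mem_erase.2 ⟨(G.ne_of_adj ((mem_neighborFinset _ _ _).1 ha)).symm, mem_univ _⟩)
    (fun a ha => mem_erase.2 ⟨ne_of_mem_of_not_mem ha hx, mem_univ _⟩)
    (by
      rw [card_erase_of_mem (mem_univ _), card_univ, card_neighborFinset_eq_degree]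
      have := Fintype.card_pos_iff.2 ⟨x⟩
      omega)
  simp only [pred, mem_inter, mem_neighborFinset, mem_filter, mem_univ, true_and] at ha
  obtain ⟨hxa, b, hab, hyb⟩ := ha
  exact ⟨a, b, hab, hxa, hyb⟩

theorem exists_split_isChain_append_reverse_append {P Q : List V}
    (hc : (P ++ x :: y :: Q).IsChain (G ⊔ edge x y).Adj) (hnd : (P ++ x :: y :: Q).Nodup)
    (hall : ∀ w, w ∈ P ++ x :: y :: Q) (hxy : ¬G.Adj x y)
    (hdeg : Fintype.card V < G.degree x + G.degree y) :
    ∃ L₁ L₂ L₃ : List V, L₁ ≠ [] ∧ L₃ ≠ [] ∧ P ++ x :: y :: Q = L₁ ++ L₂ ++ L₃ ∧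
      (L₁ ++ L₂.reverse ++ L₃).IsChain G.Adj := by
  have := G.symm
  rw [List.isChain_append_cons_cons] at hc
  have hnd' : (P ++ [x] ++ y :: Q).Nodup := by simpa using hnd
  have hP : (P ++ [x]).IsChain G.Adj := isChain_adj_of_isChain_sup_edge hc.1
    fun hy => List.disjoint_of_nodup_append hnd' hy List.mem_cons_self
  have hQ : (y :: Q).IsChain G.Adj := isChain_adj_of_isChain_sup_edge (edge_comm x y ▸ hc.2.2)
    fun hx => List.disjoint_of_nodup_append hnd' (by simp) hx
  obtain ⟨a, b, hab, hxa, hyb⟩ := exists_adj_adj_of_pair_infix hnd hall ⟨P, Q, by simp⟩ hdeg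
  rcases List.pair_infix_append_cons_cons hab (G.ne_of_adj hxa).symm (fun h => hxy (h ▸ hxa))
    (fun h => hxy (h ▸ hyb).symm) with ⟨A, B, rfl⟩ | ⟨A, B, rfl⟩
  · have hP' : (A ++ [a] ++ (b :: B ++ [x])).IsChain G.Adj := by simpa using hP
    refine ⟨A ++ [a], b :: B ++ [x], y :: Q, by simp, by simp, by simp, ?_⟩
    exact hP'.left_of_append.append_reverse_append hP'.right_of_append hQ (by simp)
      (by simpa [List.getLast?_cons] using hxa.symm) (by simpa using hyb.symm)
  · have hQ' : ((y :: A ++ [a]) ++ b :: B).IsChain G.Adj := by simpa using hQ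
    refine ⟨P ++ [x], y :: A ++ [a], b :: B, by simp, by simp, by simp, ?_⟩
    exact hP.append_reverse_append hQ'.left_of_append hQ'.right_of_append (by simp)
      (by simpa [List.getLast?_cons] using hxa) (by simpa using hyb)

theorem Walk.IsHamiltonian.exists_of_sup_edge {u v : V} {p : (G ⊔ edge x y).Walk u v}
    (hp : p.IsHamiltonian) (hdeg : Fintype.card V < G.degree x + G.degree y) :
    ∃ q : G.Walk u v, q.IsHamiltonian := by
  have hu : p.support.head? = some u := by cases p <;> simp
  have hv : p.support.getLast? = some v := by
    simp [List.getLast?_eq_some_getLast p.support_ne_nil]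
  have hnd := hp.isPath.support_nodup
  have hall := hp.mem_support
  by_cases hG : p.support.IsChain G.Adj
  · exact Walk.exists_isHamiltonian_of_isChain hG hnd hall hu hv
  obtain ⟨a, b, P, Q, hl, hab⟩ : ∃ a b P Q, p.support = P ++ a :: b :: Q ∧ ¬G.Adj a b := by
    simpa [List.isChain_iff_forall_rel_of_append_cons_cons] using hG
  obtain ⟨L₁, L₂, L₃, h₁, h₃, hL, hchain⟩ :
      ∃ L₁ L₂ L₃ : List V, L₁ ≠ [] ∧ L₃ ≠ [] ∧ p.support = L₁ ++ L₂ ++ L₃ ∧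
        (L₁ ++ L₂.reverse ++ L₃).IsChain G.Adj := by
    have hc := p.isChain_adj_support
    rw [hl] at hc hnd hall ⊢
    have hxy := (List.isChain_append_cons_cons.1 hc).2.1.resolve_left hab
    obtain ⟨⟨rfl, rfl⟩ | ⟨rfl, rfl⟩, -⟩ := (edge_adj _ _ _ _).1 hxy
    · exact exists_split_isChain_append_reverse_append hc hnd hall hab hdeg
    · rw [edge_comm] at hc
      exact exists_split_isChain_append_reverse_append hc hnd hall hab (by omega)
  have hperm : (L₁ ++ L₂.reverse ++ L₃).Perm p.support :=
    hL ▸ ((List.reverse_perm L₂).append_left L₁).append_right L₃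
  obtain ⟨c, L₁, rfl⟩ := List.exists_cons_of_ne_nil h₁
  obtain ⟨L₃, d, rfl⟩ := (List.eq_nil_or_concat' L₃).resolve_left h₃
  rw [hL] at hu hv
  exact Walk.exists_isHamiltonian_of_isChain hchain (hperm.nodup_iff.2 hnd)
    (fun w => hperm.mem_iff.2 (hall w)) (by simpa using hu) (by simpa [List.getLast?_cons] using hv)

theorem isHamiltonConnected_of_card_lt_degree_add_degree
    (h : ∀ u v, u ≠ v → ¬G.Adj u v → Fintype.card V < G.degree u + G.degree v) :
    G.IsHamiltonConnected := by
  rename_i hdec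
  revert hdec
  induction G using WellFoundedGT.induction with
  | _ G ih =>
  intro _ h
  by_cases hG : ∀ a b, a ≠ b → G.Adj a b
  · exact isHamiltonConnected_of_forall_adj hG
  push Not at hG
  obtain ⟨x, y, hxy, hnadj⟩ := hG
  have hle : G ≤ G ⊔ edge x y := le_sup_left
  have hsup : ∀ a b, a ≠ b → ¬(G ⊔ edge x y).Adj a b →
      Fintype.card V < (G ⊔ edge x y).degree a + (G ⊔ edge x y).degree b :=
    fun a b hab hnab => calc
      Fintype.card V < G.degree a + G.degree b := h a b hab fun h' => hnab (hle h')
      _ ≤ _ := add_le_add (degree_le_of_le hle) (degree_le_of_le hle)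
  intro u v huv
  obtain ⟨p, hp⟩ := ih _ (G.lt_sup_edge x y hxy hnadj) hsup huv
  exact hp.exists_of_sup_edge (h x y hxy hnadj)

end SimpleGraph

/-- Erdős–Gallai: if d(u)+d(v) ≥ n+1 for every pair of nonadjacent vertices,
G is Hamilton-connected. -/
theorem erdos_gallai_hamilton_connected (n : ℕ) (G : SimpleGraph (Fin n))
    [DecidableRel G.Adj]
    (h : ∀ u v : Fin n, u ≠ v → ¬ G.Adj u v → n + 1 ≤ G.degree u + G.degree v) :
    ∀ u v : Fin n, u ≠ v → ∃ p : G.Walk u v, p.IsHamiltonian :=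
  fun _ _ huv =>
    SimpleGraph.isHamiltonConnected_of_card_lt_degree_add_degree (by simpa using h) huv
end

section
/- A graph G of order n has a Hamiltonian path if and only if its (n-1)-closure C_{n-1}(G) has a Hamiltonian path. -/
open scoped Classical

/-- One step of forming the k-closure: join a pair of nonadjacent vertices
whose degree sum is at least k. -/
def ClosureStep {V : Type*} [Fintype V] (k : ℕ) (G H : SimpleGraph V) : Prop :=
  ∃ u v : V, u ≠ v ∧ ¬ G.Adj u v ∧ k ≤ G.degree u + G.degree v ∧
    H = G ⊔ SimpleGraph.edge u v

/-- `H` is a k-closure of `G`: obtained from `G` by successively joining pairs of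
nonadjacent vertices of degree sum at least `k`, until no such pair remains. -/
def IsKClosure {V : Type*} [Fintype V] (k : ℕ) (G H : SimpleGraph V) : Prop :=
  Relation.ReflTransGen (ClosureStep k) G H ∧ ∀ H', ¬ ClosureStep k H H'

/-!
Adding an edge `uv` with `deg u + deg v ≥ n - 1` cannot create a Hamiltonian path. Write a
Hamiltonian path of `G + uv` through `uv` as `P u, v Q`. If some vertex `x` of `v Q` adjacent to
`u` is followed by a neighbour `y` of `v` (or ends the path), then reversing the segment from `v`
to `x` gives the Hamiltonian path `P u, x … v, y …` of `G`; symmetrically on `P u`. Otherwise the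
neighbours of `u` on `v Q`, shifted by one, avoid the neighbours of `v` there and the last position,
so `u` and `v` have at most `|v Q| - 1` neighbours on `v Q` in total, and likewise at most
`|P u| - 1` on `P u`; hence `deg u + deg v ≤ n - 2`.
-/

theorem List.exists_split_or_countP_le {α : Type*} (P Q : α → Bool) (x : α) (r : List α) :
    (∃ l₁ l₂, x :: r = l₁ ++ l₂ ∧ (∃ a ∈ l₁.getLast?, P a) ∧ ∀ b ∈ l₂.head?, Q b) ∨
      (x :: r).countP P + r.countP Q ≤ r.length := by
  induction r generalizing x with
  | nil =>
    by_cases hx : P x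
    · exact .inl ⟨[x], [], rfl, ⟨x, rfl, hx⟩, by simp⟩
    · exact .inr (by simp [hx])
  | cons y s ih =>
    rcases ih y with ⟨l₁, l₂, hsplit, ⟨a, ha, hPa⟩, hQ⟩ | hcount
    · refine .inl ⟨x :: l₁, l₂, by rw [hsplit, List.cons_append], ⟨a, ?_, hPa⟩, hQ⟩
      simp [List.getLast?_cons, Option.mem_def.mp ha]
    · by_cases hxy : P x ∧ Q y
      · exact .inl ⟨[x], y :: s, rfl, ⟨x, rfl, hxy.1⟩, by simpa using hxy.2⟩
      · refine .inr ?_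
        simp only [List.countP_cons, List.length_cons] at hcount ⊢
        split_ifs at hcount ⊢ <;> simp_all <;> omega

namespace SimpleGraph

variable {V : Type*} {G : SimpleGraph V}

def IsHamiltonianList (G : SimpleGraph V) (l : List V) : Prop :=
  l ≠ [] ∧ l.Nodup ∧ (∀ w, w ∈ l) ∧ l.IsChain G.Adj

theorem exists_isHamiltonian_iff_exists_isHamiltonianList [DecidableEq V] :
    (∃ u v, ∃ p : G.Walk u v, p.IsHamiltonian) ↔ ∃ l, G.IsHamiltonianList l := by
  constructor
  · rintro ⟨u, v, p, hp⟩
    exact ⟨p.support, p.support_ne_nil, hp.isPath.support_nodup, hp.mem_support,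
      p.isChain_adj_support⟩
  · rintro ⟨l, hne, hnd, hcov, hch⟩
    refine ⟨_, _, Walk.ofSupport l hne hch, ?_⟩
    exact Walk.IsPath.isHamiltonian_of_mem (.mk' (by simpa using hnd)) (by simpa using hcov)

theorem IsHamiltonianList.mono {G' : SimpleGraph V} (h : G ≤ G') {l : List V}
    (hl : G.IsHamiltonianList l) : G'.IsHamiltonianList l :=
  ⟨hl.1, hl.2.1, hl.2.2.1, hl.2.2.2.imp fun _ _ hx => h hx⟩

theorem isChain_adj_of_sup_edge {u v : V} {l : List V} (h : l.IsChain (G ⊔ edge u v).Adj)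
    (hl : u ∉ l ∨ v ∉ l) : l.IsChain G.Adj :=
  h.imp_of_mem_imp fun x y hx hy hxy => hxy.resolve_right fun he => by
    rw [edge_adj] at he
    rcases he.1 with ⟨rfl, rfl⟩ | ⟨rfl, rfl⟩ <;> tauto

theorem isChain_append_reverse_append {p q₁ q₂ : List V} (hp : p.IsChain G.Adj)
    (hq : (q₁ ++ q₂).IsChain G.Adj) (hq₁ : q₁ ≠ [])
    (hpq₁ : ∀ x ∈ p.getLast?, ∀ y ∈ q₁.getLast?, G.Adj x y)
    (hq₁q₂ : ∀ x ∈ q₁.head?, ∀ y ∈ q₂.head?, G.Adj x y) :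
    (p ++ (q₁.reverse ++ q₂)).IsChain G.Adj := by
  rw [List.isChain_append] at hq
  refine hp.append (.append ?_ hq.2.1 ?_) ?_
  · exact List.isChain_reverse.mpr (hq.1.imp fun _ _ h => h.symm)
  · simpa only [List.getLast?_reverse] using hq₁q₂
  · rwa [List.head?_append_of_ne_nil _ (by simpa using hq₁), List.head?_reverse]

theorem exists_perm_isChain_or_countP_lt {p q : List V} {u v : V} (hp : p.IsChain G.Adj)
    (hq : q.IsChain G.Adj) (hu : p.getLast? = some u) (hv : q.head? = some v) :
    (∃ l : List V, l.Perm (p ++ q) ∧ l.IsChain G.Adj) ∨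
      q.countP (G.Adj u ·) + q.countP (G.Adj v ·) < q.length := by
  obtain ⟨r, rfl⟩ := List.head?_eq_some_iff.mp hv
  rcases List.exists_split_or_countP_le (G.Adj u ·) (G.Adj v ·) v r with
    ⟨q₁, q₂, hsplit, ⟨w, hw, huw⟩, hq₂⟩ | hcount
  · have hq₁ : q₁ ≠ [] := by rintro rfl; simp at hw
    refine .inl ⟨p ++ (q₁.reverse ++ q₂), ?_, ?_⟩
    · rw [hsplit]
      exact ((List.reverse_perm q₁).append_right q₂).append_left p
    · refine isChain_append_reverse_append hp (hsplit ▸ hq) hq₁ ?_ ?_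
      · simp_all
      · rw [← List.head?_append_of_ne_nil q₁ (l₂ := q₂) hq₁, ← hsplit]
        simp_all
  · right
    simp only [List.countP_cons, G.irrefl, decide_false, Bool.false_eq_true, ite_false,
      List.length_cons] at hcount ⊢
    omega

variable [Fintype V]

theorem countP_adj_eq_degree {l : List V} (hnd : l.Nodup) (hcov : ∀ w, w ∈ l) (u : V) :
    l.countP (G.Adj u ·) = G.degree u := by
  rw [List.countP_eq_length_filter, ← List.toFinset_card_of_nodup (hnd.filter _),
    ← card_neighborFinset_eq_degree, neighborFinset_eq_filter]
  congr 1
  ext w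
  simp [hcov]

theorem exists_perm_isChain_of_degree_add_degree {p q : List V} {u v : V}
    (hp : p.IsChain G.Adj) (hq : q.IsChain G.Adj) (hu : p.getLast? = some u)
    (hv : q.head? = some v) (hnd : (p ++ q).Nodup) (hcov : ∀ w, w ∈ p ++ q)
    (hdeg : Fintype.card V - 1 ≤ G.degree u + G.degree v) :
    ∃ l : List V, l.Perm (p ++ q) ∧ l.IsChain G.Adj := by
  rcases exists_perm_isChain_or_countP_lt hp hq hu hv with hl | hcount_q
  · exact hl
  -- Read backwards, the path becomes `rev q ++ rev p`, with the roles of `u` and `v` swapped.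
  have hrev : (p ++ q).reverse = q.reverse ++ p.reverse := List.reverse_append
  rcases exists_perm_isChain_or_countP_lt (u := v) (v := u)
      (List.isChain_reverse.mpr (hq.imp fun _ _ h => h.symm))
      (List.isChain_reverse.mpr (hp.imp fun _ _ h => h.symm))
      (by rwa [List.getLast?_reverse]) (by rwa [List.head?_reverse]) with
    ⟨l, hperm, hl⟩ | hcount_p
  · exact ⟨l, hperm.trans (hrev ▸ List.reverse_perm _), hl⟩
  have hcard : Fintype.card V = p.length + q.length := by
    rw [← List.length_append, ← List.toFinset_card_of_nodup hnd, ← Finset.card_univ]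
    congr 1
    ext w
    simpa using hcov w
  have hdeg_u := countP_adj_eq_degree (G := G) hnd hcov u
  have hdeg_v := countP_adj_eq_degree (G := G) hnd hcov v
  simp only [List.countP_append, List.countP_reverse, List.length_reverse] at *
  omega

theorem IsHamiltonianList.exists_of_sup_edge {u v : V} {l : List V}
    (hl : (G ⊔ edge u v).IsHamiltonianList l)
    (hdeg : Fintype.card V - 1 ≤ G.degree u + G.degree v) : ∃ l', G.IsHamiltonianList l' := by
  obtain ⟨hne, hnd, hcov, hch⟩ := hl
  by_cases hG : l.IsChain G.Adj
  · exact ⟨l, hne, hnd, hcov, hG⟩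
  obtain ⟨a, b, l₁, l₂, rfl, hab⟩ : ∃ a b l₁ l₂, l = l₁ ++ a :: b :: l₂ ∧ ¬ G.Adj a b := by
    simpa [List.isChain_iff_forall_rel_of_append_cons_cons] using hG
  obtain ⟨hch₁, hab', hch₂⟩ := List.isChain_append_cons_cons.mp hch
  have hedge : a = u ∧ b = v ∨ a = v ∧ b = u := by
    simp only [sup_adj, hab, false_or, edge_adj] at hab'
    exact hab'.1
  have hsplit : l₁ ++ a :: b :: l₂ = (l₁ ++ [a]) ++ b :: l₂ := by simp
  rw [hsplit] at hnd hcov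
  have hdisj := (List.nodup_append.mp hnd).2.2
  have hb : b ∉ l₁ ++ [a] := fun h => hdisj _ h _ List.mem_cons_self rfl
  have ha : a ∉ b :: l₂ := fun h => hdisj _ (by simp) _ h rfl
  obtain ⟨l', hperm, hl'⟩ := exists_perm_isChain_of_degree_add_degree (u := a) (v := b)
    (isChain_adj_of_sup_edge hch₁ (by rcases hedge with ⟨rfl, rfl⟩ | ⟨rfl, rfl⟩ <;> tauto))
    (isChain_adj_of_sup_edge hch₂ (by rcases hedge with ⟨rfl, rfl⟩ | ⟨rfl, rfl⟩ <;> tauto))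
    (by simp) rfl hnd hcov (by rcases hedge with ⟨rfl, rfl⟩ | ⟨rfl, rfl⟩ <;> omega)
  refine ⟨l', ?_, hperm.nodup_iff.mpr hnd, fun w => hperm.mem_iff.mpr (hcov w), hl'⟩
  rintro rfl
  simpa using hperm.length_eq

end SimpleGraph

theorem ClosureStep.exists_isHamiltonian_iff {V : Type*} [Fintype V] [DecidableEq V]
    {G H : SimpleGraph V} (h : ClosureStep (Fintype.card V - 1) G H) :
    (∃ u v, ∃ p : G.Walk u v, p.IsHamiltonian) ↔ ∃ u v, ∃ p : H.Walk u v, p.IsHamiltonian := by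
  obtain ⟨u, v, -, -, hdeg, rfl⟩ := h
  simp only [SimpleGraph.exists_isHamiltonian_iff_exists_isHamiltonianList]
  exact ⟨fun ⟨l, hl⟩ => ⟨l, hl.mono le_sup_left⟩, fun ⟨_, hl⟩ => hl.exists_of_sup_edge hdeg⟩

/-- A graph G of order n has a Hamiltonian path iff its (n-1)-closure has one. -/
theorem ham_path_iff_closure (n : ℕ) (G H : SimpleGraph (Fin n))
    (hH : IsKClosure (n - 1) G H) :
    (∃ (u v : Fin n) (p : G.Walk u v), p.IsHamiltonian) ↔
      (∃ (u v : Fin n) (p : H.Walk u v), p.IsHamiltonian) := by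
  obtain ⟨hGH, -⟩ := hH
  rw [show n - 1 = Fintype.card (Fin n) - 1 by simp] at hGH
  induction hGH with
  | refl => rfl
  | tail _ hstep ih => exact ih.trans (ClosureStep.exists_isHamiltonian_iff hstep)
end

section
/- Let G be a graph with m edges. Then the spectral radius μ(G) of its adjacency matrix satisfies μ(G) ≤ -1/2 + sqrt(2m + 1/4), with equality if and only if G is a complete graph together with some isolated vertices. -/
open scoped Classical

open Finset Matrix

/-!
Take an eigenvector `x` of an eigenvalue `μ` and a vertex `w` where `|x|` is largest.
Comparing `μ x_w` and `μ² x_w` with the sums of `x` over neighbours and over walks of length two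
from `w` gives `|μ| ≤ d(w)` and `μ² ≤ ∑_{j ∼ w} d(j)`; since the degrees of `w`, of its
neighbours and of the remaining vertices add up to `2m`, this is `μ² + |μ| ≤ 2m`. Equality
forces every vertex outside the closed neighbourhood `N[w]` to be isolated and every neighbour
of `w` to have degree `d(w) = |N[w]| - 1`, so `N[w]` spans a complete graph. Conversely, on a
complete graph `K_k` plus isolated vertices, the indicator of `K_k` is an eigenvector of
eigenvalue `k - 1`, and `2m = k(k - 1)`.
-/

namespace SimpleGraph

section

variable {V : Type*} [Fintype V] (G : SimpleGraph V) [DecidableRel G.Adj]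

section Eigenvector

variable {G} {x : V → ℝ} {μ : ℝ}

theorem sum_neighborFinset_eq_of_mulVec_eq_smul (hx : G.adjMatrix ℝ *ᵥ x = μ • x) (v : V) :
    ∑ j ∈ G.neighborFinset v, x j = μ * x v := by
  simpa [adjMatrix_mulVec_apply] using congrFun hx v

theorem abs_sum_neighborFinset_le {w : V} (hw : ∀ v, |x v| ≤ |x w|) (v : V) :
    |∑ j ∈ G.neighborFinset v, x j| ≤ G.degree v * |x w| :=
  calc |∑ j ∈ G.neighborFinset v, x j| ≤ ∑ j ∈ G.neighborFinset v, |x j| :=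
        abs_sum_le_sum_abs _ _
    _ ≤ ∑ _j ∈ G.neighborFinset v, |x w| := sum_le_sum fun j _ => hw j
    _ = G.degree v * |x w| := by rw [sum_const, card_neighborFinset_eq_degree, nsmul_eq_mul]

theorem exists_abs_le_degree_and_sq_le_sum_degree (hx0 : x ≠ 0)
    (hx : G.adjMatrix ℝ *ᵥ x = μ • x) :
    ∃ w, |μ| ≤ G.degree w ∧ μ ^ 2 ≤ ∑ j ∈ G.neighborFinset w, (G.degree j : ℝ) := by
  obtain ⟨v₀, hv₀⟩ := Function.ne_iff.mp hx0
  obtain ⟨w, -, hw⟩ := exists_max_image univ (fun v => |x v|) ⟨v₀, mem_univ v₀⟩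
  replace hw : ∀ v, |x v| ≤ |x w| := fun v => hw v (mem_univ v)
  have hxw : 0 < |x w| := (abs_pos.mpr hv₀).trans_le (hw v₀)
  have hsum := sum_neighborFinset_eq_of_mulVec_eq_smul hx
  refine ⟨w, le_of_mul_le_mul_right ?_ hxw, le_of_mul_le_mul_right ?_ hxw⟩
  · calc |μ| * |x w| = |∑ j ∈ G.neighborFinset w, x j| := by rw [hsum, abs_mul]
      _ ≤ G.degree w * |x w| := abs_sum_neighborFinset_le hw w
  · calc μ ^ 2 * |x w| = |∑ j ∈ G.neighborFinset w, ∑ k ∈ G.neighborFinset j, x k| := by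
          simp only [hsum, ← mul_sum, abs_mul, ← sq_abs μ]
          ring
      _ ≤ ∑ j ∈ G.neighborFinset w, |∑ k ∈ G.neighborFinset j, x k| :=
          abs_sum_le_sum_abs _ _
      _ ≤ ∑ j ∈ G.neighborFinset w, G.degree j * |x w| :=
          sum_le_sum fun j _ => abs_sum_neighborFinset_le hw j
      _ = (∑ j ∈ G.neighborFinset w, (G.degree j : ℝ)) * |x w| := (sum_mul _ _ _).symm

end Eigenvector

variable [DecidableEq V]

theorem sum_degree_neighborFinset_add_degree_add_sum_compl (w : V) :
    ∑ j ∈ G.neighborFinset w, G.degree j + G.degree w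
      + ∑ j ∈ (insert w (G.neighborFinset w))ᶜ, G.degree j = 2 * #G.edgeFinset := by
  rw [← G.sum_degrees_eq_twice_card_edges, ← sum_add_sum_compl (insert w (G.neighborFinset w)),
    sum_insert (by simp)]
  ring

theorem adj_iff_mem_insert_neighborFinset {w : V}
    (hsum : ∑ j ∈ G.neighborFinset w, G.degree j = G.degree w ^ 2)
    (hiso : ∀ v ∉ insert w (G.neighborFinset w), G.degree v = 0) (u v : V) :
    G.Adj u v ↔
      u ≠ v ∧ u ∈ insert w (G.neighborFinset w) ∧ v ∈ insert w (G.neighborFinset w) := by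
  set F := insert w (G.neighborFinset w)
  have hmem : ∀ {u v}, G.Adj u v → u ∈ F := fun {u v} h => by
    by_contra hu
    exact (G.degree_pos_iff_exists_adj u).mpr ⟨v, h⟩ |>.ne' (hiso u hu)
  have hsub : ∀ u, G.neighborFinset u ⊆ F.erase u := fun u v hv => by
    rw [mem_neighborFinset] at hv
    exact mem_erase.mpr ⟨hv.ne', hmem hv.symm⟩
  have hcard : ∀ u ∈ F, #(F.erase u) = G.degree w := fun u hu => by
    rw [card_erase_of_mem hu, card_insert_of_notMem (by simp), card_neighborFinset_eq_degree]
    rfl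
  -- `d(w)` degrees, each at most `d(w)`, sum to `d(w)²` only if all equal `d(w)`.
  have hdeg : ∀ j ∈ G.neighborFinset w, G.degree j = G.degree w := by
    refine (sum_eq_sum_iff_of_le fun j hj => ?_).mp ?_
    · rw [← card_neighborFinset_eq_degree, ← hcard j (mem_insert_of_mem hj)]
      exact card_le_card (hsub j)
    · rw [hsum, sum_const, card_neighborFinset_eq_degree, smul_eq_mul, sq]
  have hN : ∀ u ∈ F, G.neighborFinset u = F.erase u := fun u hu => by
    refine eq_of_subset_of_card_le (hsub u) ?_
    rw [hcard u hu, card_neighborFinset_eq_degree]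
    rcases mem_insert.mp hu with rfl | hu
    exacts [le_rfl, (hdeg u hu).ge]
  refine ⟨fun h => ⟨h.ne, hmem h, hmem h.symm⟩, fun ⟨hne, hu, hv⟩ => ?_⟩
  rw [← mem_neighborFinset, hN u hu]
  exact mem_erase.mpr ⟨hne.symm, hv⟩

section Eigenvalue

variable {G} {x : V → ℝ} {μ : ℝ}

theorem sq_add_abs_le_two_mul_card_edgeFinset (hx0 : x ≠ 0)
    (hx : G.adjMatrix ℝ *ᵥ x = μ • x) :
    μ ^ 2 + |μ| ≤ 2 * #G.edgeFinset := by
  obtain ⟨w, hdeg, hsq⟩ := exists_abs_le_degree_and_sq_le_sum_degree hx0 hx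
  have hsplit :=
    congrArg (Nat.cast : ℕ → ℝ) (G.sum_degree_neighborFinset_add_degree_add_sum_compl w)
  push_cast at hsplit
  have hrest : 0 ≤ ∑ j ∈ (insert w (G.neighborFinset w))ᶜ, (G.degree j : ℝ) :=
    sum_nonneg fun _ _ => Nat.cast_nonneg _
  linarith

theorem exists_adj_iff_of_sq_add_eq_two_mul_card_edgeFinset (hx0 : x ≠ 0)
    (hx : G.adjMatrix ℝ *ᵥ x = μ • x) (heq : μ ^ 2 + μ = 2 * #G.edgeFinset) :
    ∃ K : Finset V, ∀ u v, G.Adj u v ↔ u ≠ v ∧ u ∈ K ∧ v ∈ K := by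
  obtain ⟨w, hdeg, hsq⟩ := exists_abs_le_degree_and_sq_le_sum_degree hx0 hx
  have hsplit :=
    congrArg (Nat.cast : ℕ → ℝ) (G.sum_degree_neighborFinset_add_degree_add_sum_compl w)
  push_cast at hsplit
  have hrest : 0 ≤ ∑ j ∈ (insert w (G.neighborFinset w))ᶜ, (G.degree j : ℝ) :=
    sum_nonneg fun _ _ => Nat.cast_nonneg _
  have hμ : (G.degree w : ℝ) = μ := by linarith [le_abs_self μ]
  refine ⟨_, G.adj_iff_mem_insert_neighborFinset (w := w) ?_ fun v hv => ?_⟩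
  · exact_mod_cast (show ∑ j ∈ G.neighborFinset w, (G.degree j : ℝ) = G.degree w ^ 2 by
      rw [hμ]; linarith)
  · have hzero : ∑ j ∈ (insert w (G.neighborFinset w))ᶜ, (G.degree j : ℝ) = 0 := by
      linarith [le_abs_self μ]
    exact_mod_cast (sum_eq_zero_iff_of_nonneg fun j _ => Nat.cast_nonneg _).mp hzero v
      (mem_compl.mpr hv)

end Eigenvalue

section CompleteOn

variable {G} {K : Finset V}

theorem neighborFinset_eq_of_adj_iff
    (hK : ∀ u v, G.Adj u v ↔ u ≠ v ∧ u ∈ K ∧ v ∈ K) (v : V) :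
    G.neighborFinset v = if v ∈ K then K.erase v else ∅ := by
  ext u
  split_ifs with hv <;> simp [hK, hv, ne_comm]

theorem two_mul_card_edgeFinset_of_adj_iff
    (hK : ∀ u v, G.Adj u v ↔ u ≠ v ∧ u ∈ K ∧ v ∈ K) :
    2 * #G.edgeFinset = #K * (#K - 1) := by
  rw [← G.sum_degrees_eq_twice_card_edges]
  simp_rw [← card_neighborFinset_eq_degree, neighborFinset_eq_of_adj_iff hK, apply_ite card,
    card_empty, sum_ite_mem, univ_inter]
  rw [sum_congr rfl fun v hv => card_erase_of_mem hv, sum_const, smul_eq_mul]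

theorem adjMatrix_mulVec_indicator_of_adj_iff
    (hK : ∀ u v, G.Adj u v ↔ u ≠ v ∧ u ∈ K ∧ v ∈ K) :
    G.adjMatrix ℝ *ᵥ (fun v => if v ∈ K then 1 else 0)
      = ((#K : ℝ) - 1) • fun v => if v ∈ K then 1 else 0 := by
  ext v
  rw [adjMatrix_mulVec_apply, neighborFinset_eq_of_adj_iff hK]
  split_ifs with hv
  · rw [sum_congr rfl fun u hu => if_pos (mem_of_mem_erase hu), sum_const, card_erase_of_mem hv,
      Pi.smul_apply, if_pos hv, nsmul_eq_mul, Nat.cast_sub (card_pos.mpr ⟨v, hv⟩)]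
    simp
  · simp [hv]

end CompleteOn

end

-- An edgeless graph is complete on any single vertex, so `K` may be taken nonempty.
theorem exists_nonempty_finset_adj_iff {V : Type*} [Finite V] [Nonempty V] {G : SimpleGraph V}
    {K : Set V} (hK : ∀ u v, G.Adj u v ↔ u ≠ v ∧ u ∈ K ∧ v ∈ K) :
    ∃ K : Finset V, K.Nonempty ∧ ∀ u v, G.Adj u v ↔ u ≠ v ∧ u ∈ K ∧ v ∈ K := by
  rcases K.eq_empty_or_nonempty with rfl | hne
  · obtain ⟨v⟩ := ‹Nonempty V›
    refine ⟨{v}, singleton_nonempty v, fun a b => ?_⟩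
    simp only [hK, Set.mem_empty_iff_false, mem_singleton]
    grind
  · exact ⟨(Set.toFinite K).toFinset, by simpa using hne, by simpa using hK⟩

end SimpleGraph

theorem le_neg_half_add_sqrt_of_sq_add_abs_le {x c : ℝ} (h : x ^ 2 + |x| ≤ c) :
    x ≤ -1/2 + √(c + 1/4) := by
  have := Real.abs_le_sqrt (show (|x| + 1/2) ^ 2 ≤ c + 1/4 by nlinarith [sq_abs x])
  linarith [le_abs_self x, le_abs_self (|x| + 1/2)]

theorem sq_add_self_eq_of_eq_neg_half_add_sqrt {x c : ℝ} (hc : 0 ≤ c + 1/4)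
    (h : x = -1/2 + √(c + 1/4)) : x ^ 2 + x = c := by
  nlinarith [Real.sq_sqrt hc]

theorem neg_half_add_sqrt_mul_sub_one {k : ℝ} (hk : 1/2 ≤ k) :
    -1/2 + √(k * (k - 1) + 1/4) = k - 1 := by
  rw [show k * (k - 1) + 1/4 = (k - 1/2) ^ 2 by ring, Real.sqrt_sq (by linarith)]
  ring

/-- Stanley-type bound: μ(G) ≤ -1/2 + √(2m + 1/4), with equality iff G is a
complete graph together with some isolated vertices. -/
theorem adj_spectral_radius_bound {V : Type*} [Fintype V] (G : SimpleGraph V) (μ : ℝ)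
    (hμ : IsGreatest {x : ℝ | ∃ f : V → ℝ, f ≠ 0 ∧ (G.adjMatrix ℝ).mulVec f = x • f} μ) :
    μ ≤ -1/2 + Real.sqrt (2 * G.edgeFinset.card + 1/4) ∧
      (μ = -1/2 + Real.sqrt (2 * G.edgeFinset.card + 1/4) ↔
        ∃ K : Set V, ∀ u v : V, G.Adj u v ↔ u ≠ v ∧ u ∈ K ∧ v ∈ K) := by
  obtain ⟨⟨f, hf0, hf⟩, hmax⟩ := hμ
  have hbound := le_neg_half_add_sqrt_of_sq_add_abs_le
    (SimpleGraph.sq_add_abs_le_two_mul_card_edgeFinset hf0 hf)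
  refine ⟨hbound, fun heq => ?_, fun ⟨K, hK⟩ => ?_⟩
  · obtain ⟨K, hK⟩ := SimpleGraph.exists_adj_iff_of_sq_add_eq_two_mul_card_edgeFinset hf0 hf
      (sq_add_self_eq_of_eq_neg_half_add_sqrt (by positivity) heq)
    exact ⟨K, by simpa using hK⟩
  · have : Nonempty V := ⟨(Function.ne_iff.mp hf0).choose⟩
    obtain ⟨K, ⟨v, hv⟩, hK⟩ := SimpleGraph.exists_nonempty_finset_adj_iff hK
    have hk : (1 : ℝ) ≤ #K := by exact_mod_cast card_pos.mpr ⟨v, hv⟩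
    have hm : 2 * (#G.edgeFinset : ℝ) = #K * (#K - 1) := by
      rw [← Nat.cast_pred (card_pos.mpr ⟨v, hv⟩)]
      exact_mod_cast SimpleGraph.two_mul_card_edgeFinset_of_adj_iff hK
    have hle : (#K : ℝ) - 1 ≤ μ := hmax ⟨_, fun h => by simpa [hv] using congrFun h v,
      SimpleGraph.adjMatrix_mulVec_indicator_of_adj_iff hK⟩
    rw [hm, neg_half_add_sqrt_mul_sub_one (by linarith)] at hbound ⊢
    exact le_antisymm hbound hle
end

section
/- Let G be a graph of order n ≥ 2 with m edges. Then max over vertices v of (d(v) + m(v)) ≤ 2m/(n-1) + n - 2, where m(v) is the average degree of the neighbors of v (and m(v)=0 if d(v)=0). Equality holds if and only if G contains the star K_{1,n-1} as a spanning subgraph or G is K_{n-1} plus an isolated vertex. -/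
open scoped Classical

open Finset


section aux

variable {n : ℕ} (G : SimpleGraph (Fin n))

private lemma split_sum' (v : Fin n) :
    2 * G.edgeFinset.card = G.degree v + (∑ u ∈ G.neighborFinset v, G.degree u)
      + ∑ w ∈ Finset.univ \ insert v (G.neighborFinset v), G.degree w := by
  rw [← G.sum_degrees_eq_twice_card_edges]
  rw [← Finset.sum_sdiff (Finset.subset_univ (insert v (G.neighborFinset v)))]
  rw [Finset.sum_insert (by simp [SimpleGraph.irrefl])]
  ring

private lemma dcount' (v : Fin n) :
    ∑ u ∈ G.neighborFinset v, (G.neighborFinset u ∩ (Finset.univ \ insert v (G.neighborFinset v))).card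
      = ∑ w ∈ Finset.univ \ insert v (G.neighborFinset v), (G.neighborFinset w ∩ G.neighborFinset v).card := by
  have key : ∀ (A B : Finset (Fin n)),
      ∑ u ∈ A, (G.neighborFinset u ∩ B).card = ∑ u ∈ A, ∑ w ∈ B, if G.Adj u w then 1 else 0 := by
    intro A B
    refine Finset.sum_congr rfl fun u _ => ?_
    rw [Finset.inter_comm, ← Finset.filter_mem_eq_inter, Finset.card_filter]
    refine Finset.sum_congr rfl fun w _ => ?_
    simp [SimpleGraph.mem_neighborFinset]
  rw [key, key, Finset.sum_comm]
  refine Finset.sum_congr rfl fun w _ => Finset.sum_congr rfl fun u _ => ?_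
  simp [SimpleGraph.adj_comm]

private lemma nb_subset' (v u : Fin n) (hu : u ∈ G.neighborFinset v) :
    G.neighborFinset u ⊆ insert v ((G.neighborFinset v).erase u)
      ∪ (G.neighborFinset u ∩ (Finset.univ \ insert v (G.neighborFinset v))) := by
  intro w hw
  by_cases hwv : w = v
  · subst hwv; simp
  by_cases hwN : w ∈ G.neighborFinset v
  · have hwu : w ≠ u := by
      rintro rfl; simp at hw
    exact Finset.mem_union_left _ (Finset.mem_insert_of_mem (Finset.mem_erase.2 ⟨hwu, hwN⟩))
  · exact Finset.mem_union_right _ (Finset.mem_inter.2 ⟨hw, by simp [hwv, hwN]⟩)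

private lemma deg_nb_le' (v u : Fin n) (hu : u ∈ G.neighborFinset v) :
    G.degree u ≤ G.degree v + (G.neighborFinset u ∩ (Finset.univ \ insert v (G.neighborFinset v))).card := by
  have h := Finset.card_le_card (nb_subset' G v u hu)
  rw [← SimpleGraph.card_neighborFinset_eq_degree]
  refine h.trans ?_
  refine (Finset.card_union_le _ _).trans ?_
  gcongr
  rw [Finset.card_insert_of_notMem (by simp [SimpleGraph.irrefl])]
  rw [Finset.card_erase_of_mem hu, ← SimpleGraph.card_neighborFinset_eq_degree]
  have hd : 1 ≤ (G.neighborFinset v).card := Finset.card_pos.2 ⟨u, hu⟩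
  omega

private lemma cardR' (v : Fin n) :
    (Finset.univ \ insert v (G.neighborFinset v)).card = n - 1 - G.degree v := by
  rw [Finset.card_sdiff_of_subset (Finset.subset_univ _), Finset.card_insert_of_notMem (by simp [SimpleGraph.irrefl])]
  simp [SimpleGraph.card_neighborFinset_eq_degree]
  omega

private lemma nb_eq_of_tight' (v u : Fin n) (hu : u ∈ G.neighborFinset v)
    (hb : (G.neighborFinset u ∩ (Finset.univ \ insert v (G.neighborFinset v))).card = 0)
    (hd : G.degree u = G.degree v) :
    G.neighborFinset u = insert v ((G.neighborFinset v).erase u) := by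
  have hsub : G.neighborFinset u ⊆ insert v ((G.neighborFinset v).erase u) := by
    have h := nb_subset' G v u hu
    rw [Finset.card_eq_zero] at hb
    rw [hb, Finset.union_empty] at h
    exact h
  refine Finset.eq_of_subset_of_card_le hsub ?_
  rw [Finset.card_insert_of_notMem (by simp [SimpleGraph.irrefl]),
    Finset.card_erase_of_mem hu]
  rw [SimpleGraph.card_neighborFinset_eq_degree, SimpleGraph.card_neighborFinset_eq_degree, hd]
  have hd1 : 1 ≤ G.degree v := by
    rw [← SimpleGraph.card_neighborFinset_eq_degree]; exact Finset.card_pos.2 ⟨u, hu⟩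
  omega

private lemma deg_full_adj' (c : Fin n) (hc : G.degree c = n - 1) :
    ∀ u : Fin n, u ≠ c → G.Adj c u := by
  have hsub : G.neighborFinset c ⊆ Finset.univ.erase c := by
    intro w hw
    exact Finset.mem_erase.2 ⟨fun h => by subst h; simp at hw, Finset.mem_univ _⟩
  have hcard : (Finset.univ.erase c).card ≤ (G.neighborFinset c).card := by
    rw [SimpleGraph.card_neighborFinset_eq_degree, hc, Finset.card_erase_of_mem (Finset.mem_univ _)]
    simp
  have heq := Finset.eq_of_subset_of_card_le hsub hcard
  intro u hu
  have : u ∈ G.neighborFinset c := by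
    rw [heq]; exact Finset.mem_erase.2 ⟨hu, Finset.mem_univ _⟩
  simpa using this

private lemma arith_core' (d t b c S M : ℤ) (hd : 1 ≤ d) (ht : 0 ≤ t) (hb0 : 0 ≤ b) (hc : 0 ≤ c)
    (hb : b ≤ d*t) (hS : S ≤ d*d + b) (hM : 2*M = d + S + b + c) :
    S*(d+t) + d*d*(d+t) ≤ (d+t-1)*d*(d+t) + 2*M*d := by
  have hd0 : (0:ℤ) ≤ d := zero_le_one.trans hd
  have htt : 0 ≤ t*(t-1) := by
    rcases le_or_gt 1 t with h|h
    · exact mul_nonneg (by linarith) (by linarith)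
    · have : t = 0 := by omega
      simp [this]
  rcases le_or_gt t d with h|h
  · nlinarith [mul_nonneg hd0 htt, mul_nonneg hb0 (sub_nonneg.2 h),
      mul_nonneg ht (sub_nonneg.2 hS), mul_nonneg hc hd0]
  · nlinarith [mul_nonneg (sub_nonneg.2 hb) (sub_nonneg.2 h.le),
      mul_nonneg (mul_nonneg hd0 ht) (sub_nonneg.2 hd),
      mul_nonneg ht (sub_nonneg.2 hS), mul_nonneg hc hd0]

private lemma arith_eq' (d t b c S M : ℤ) (hd : 1 ≤ d) (ht : 0 ≤ t) (hb0 : 0 ≤ b) (hc : 0 ≤ c)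
    (hb : b ≤ d*t) (hS : S ≤ d*d + b) (hM : 2*M = d + S + b + c)
    (heq : S*(d+t) + d*d*(d+t) = (d+t-1)*d*(d+t) + 2*M*d) :
    t = 0 ∨ (d = 1 ∧ S = 1 + t) ∨ (t = 1 ∧ b = 0 ∧ c = 0 ∧ S = d*d) := by
  have hd0 : (0:ℤ) ≤ d := zero_le_one.trans hd
  have key : d*t*(t-1) + b*(d-t) + c*d + (d*d+b-S)*t = 0 := by
    linear_combination -d*hM - heq
  have he : 0 ≤ d*d + b - S := sub_nonneg.2 hS
  rcases eq_or_lt_of_le ht with ht0|ht1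
  · exact Or.inl ht0.symm
  rcases eq_or_lt_of_le hd with hd1|hd2
  · -- d = 1
    subst hd1
    have hbt : b ≤ t := by linarith
    have h1 : (1:ℤ)*1 + b - S = 0 ∧ c = 0 ∧ (t-1)*(t-b) = 0 := by
      refine ⟨?_, ?_, ?_⟩ <;>
        nlinarith [mul_nonneg (by linarith : (0:ℤ) ≤ t - 1) (sub_nonneg.2 hbt), mul_nonneg he ht,
          hc, he, ht1]
    rcases mul_eq_zero.1 h1.2.2 with h2|h2
    · have htv : t = 1 := by linarith
      subst htv
      rcases (by omega : b = 0 ∨ b = 1) with h3|h3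
      · exact Or.inr (Or.inr ⟨rfl, h3, h1.2.1, by linarith [h1.1]⟩)
      · exact Or.inr (Or.inl ⟨rfl, by linarith [h1.1]⟩)
    · exact Or.inr (Or.inl ⟨rfl, by linarith [h1.1, h2]⟩)
  · -- d ≥ 2
    right; right
    have ht1' : t = 1 := by
      rcases lt_or_ge t 2 with h2|h2
      · omega
      · exfalso
        rcases le_or_gt t d with h|h
        · nlinarith [mul_nonneg (mul_nonneg hd0 ht) (by linarith : (0:ℤ) ≤ t - 1),
            mul_nonneg hb0 (sub_nonneg.2 h), mul_nonneg hc hd0, mul_nonneg he ht]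
        · nlinarith [mul_nonneg (sub_nonneg.2 hb) (sub_nonneg.2 h.le), mul_nonneg hc hd0,
            mul_nonneg he ht, mul_nonneg (mul_nonneg hd0 ht) (by linarith : (0:ℤ) ≤ d - 1)]
    subst ht1'
    have hcomp : b * (d - 1) = 0 ∧ c = 0 ∧ d*d + b - S = 0 := by
      refine ⟨?_, ?_, ?_⟩ <;>
        nlinarith [mul_nonneg hb0 (sub_nonneg.2 hd), mul_nonneg hc hd0, he]
    have hb0' : b = 0 := by
      rcases mul_eq_zero.1 hcomp.1 with h|h
      · exact h
      · exfalso; omega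
    exact ⟨rfl, hb0', hcomp.2.1, by linarith [hcomp.2.2]⟩


private lemma handshake' (v : Fin n) :
    2 * G.edgeFinset.card = G.degree v + (∑ u ∈ G.neighborFinset v, G.degree u)
      + ((∑ u ∈ G.neighborFinset v, (G.neighborFinset u ∩ (Finset.univ \ insert v (G.neighborFinset v))).card)
      + (∑ w ∈ Finset.univ \ insert v (G.neighborFinset v), (G.neighborFinset w ∩ (Finset.univ \ insert v (G.neighborFinset v))).card)) := by
  have hpt : ∀ w ∈ Finset.univ \ insert v (G.neighborFinset v),
      G.degree w = (G.neighborFinset w ∩ G.neighborFinset v).card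
        + (G.neighborFinset w ∩ (Finset.univ \ insert v (G.neighborFinset v))).card := by
    intro w hw
    rw [Finset.mem_sdiff, Finset.mem_insert] at hw
    push_neg at hw
    rw [← SimpleGraph.card_neighborFinset_eq_degree,
      ← Finset.card_union_of_disjoint (by
        refine Finset.disjoint_left.2 fun x hx hx' => ?_
        rw [Finset.mem_inter] at hx hx'
        have := hx'.2
        rw [Finset.mem_sdiff, Finset.mem_insert] at this
        exact this.2 (Or.inr hx.2))]
    congr 1
    ext x
    simp only [Finset.mem_union, Finset.mem_inter, Finset.mem_sdiff, Finset.mem_insert,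
      Finset.mem_univ, true_and]
    constructor
    · intro hx
      by_cases hxN : x ∈ G.neighborFinset v
      · exact Or.inl ⟨hx, hxN⟩
      · refine Or.inr ⟨hx, ?_⟩
        push_neg
        refine ⟨?_, hxN⟩
        rintro rfl
        rw [SimpleGraph.mem_neighborFinset] at hx
        exact hw.2.2 (by simpa [SimpleGraph.mem_neighborFinset] using hx.symm)
    · rintro (⟨hx, _⟩|⟨hx, _⟩) <;> exact hx
  rw [split_sum' G v]
  rw [Finset.sum_congr rfl hpt, Finset.sum_add_distrib, ← dcount' G v]


private lemma nat_facts' (v : Fin n) :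
    (∑ u ∈ G.neighborFinset v, (G.neighborFinset u ∩ (Finset.univ \ insert v (G.neighborFinset v))).card)
      ≤ G.degree v * (n - 1 - G.degree v) ∧
    (∑ u ∈ G.neighborFinset v, G.degree u) ≤ G.degree v * G.degree v
      + (∑ u ∈ G.neighborFinset v, (G.neighborFinset u ∩ (Finset.univ \ insert v (G.neighborFinset v))).card) := by
  constructor
  · have h := Finset.sum_le_card_nsmul (G.neighborFinset v)
      (fun u => (G.neighborFinset u ∩ (Finset.univ \ insert v (G.neighborFinset v))).card)
      (n - 1 - G.degree v)
      (fun u _ => by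
        rw [← cardR' G v]
        exact Finset.card_le_card (Finset.inter_subset_right))
    rw [SimpleGraph.card_neighborFinset_eq_degree] at h
    simpa using h
  · have h := Finset.sum_le_sum (fun u hu => deg_nb_le' G v u hu)
    rw [Finset.sum_add_distrib, Finset.sum_const, SimpleGraph.card_neighborFinset_eq_degree,
      smul_eq_mul] at h
    exact h


private lemma zfacts' (hn : 2 ≤ n) (v : Fin n) (h0 : G.degree v ≠ 0) :
    ∃ b c S M dd : ℤ, 0 ≤ b ∧ 0 ≤ c ∧ 1 ≤ dd ∧ 0 ≤ (n:ℤ) - 1 - dd ∧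
      b ≤ dd * ((n:ℤ) - 1 - dd) ∧ S ≤ dd * dd + b ∧ 2 * M = dd + S + b + c ∧
      dd = (G.degree v : ℤ) ∧ S = ((∑ u ∈ G.neighborFinset v, G.degree u : ℕ) : ℤ) ∧
      M = (G.edgeFinset.card : ℤ) ∧
      b = ((∑ u ∈ G.neighborFinset v, (G.neighborFinset u ∩ (Finset.univ \ insert v (G.neighborFinset v))).card : ℕ) : ℤ) ∧
      c = ((∑ w ∈ Finset.univ \ insert v (G.neighborFinset v), (G.neighborFinset w ∩ (Finset.univ \ insert v (G.neighborFinset v))).card : ℕ) : ℤ) := by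
  have hdn : G.degree v < n := by simpa using G.degree_lt_card_verts v
  have hd1 : 1 ≤ G.degree v := Nat.one_le_iff_ne_zero.2 h0
  obtain ⟨hb, hS⟩ := nat_facts' G v
  have hM := handshake' G v
  refine ⟨_, _, _, _, _, by positivity, by positivity, by exact_mod_cast hd1, by
    push_cast; omega, ?_, by exact_mod_cast hS, by exact_mod_cast hM.trans (add_assoc _ _ _).symm,
    rfl, rfl, rfl, rfl, rfl⟩
  have htn : ((n - 1 - G.degree v : ℕ) : ℤ) = (n:ℤ) - 1 - G.degree v := by omega
  rw [← htn]
  exact_mod_cast hb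

private lemma bound_int' (hn : 2 ≤ n) (v : Fin n) (h0 : G.degree v ≠ 0) :
    ((∑ u ∈ G.neighborFinset v, G.degree u : ℕ) : ℤ) * ((n:ℤ)-1)
      + (G.degree v : ℤ) * (G.degree v) * ((n:ℤ)-1)
      ≤ ((n:ℤ)-2) * (G.degree v) * ((n:ℤ)-1) + 2*(G.edgeFinset.card : ℤ)*(G.degree v) := by
  obtain ⟨b, c, S, M, dd, hb0, hc0, hd1, ht0, hb, hS, hM, hdd, hSd, hMd, -, -⟩ :=
    zfacts' G hn v h0
  have h := arith_core' dd ((n:ℤ) - 1 - dd) b c S M hd1 ht0 hb0 hc0 hb hS hM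
  rw [hdd] at h hS hb ht0 hd1 hM
  rw [hSd] at h hS hM
  rw [hMd] at h hM
  nlinarith [h]


private lemma eq_cases' (hn : 2 ≤ n) (v : Fin n) (h0 : G.degree v ≠ 0)
    (heq : ((∑ u ∈ G.neighborFinset v, G.degree u : ℕ) : ℤ) * ((n:ℤ)-1)
      + (G.degree v : ℤ) * (G.degree v) * ((n:ℤ)-1)
      = ((n:ℤ)-2) * (G.degree v) * ((n:ℤ)-1) + 2*(G.edgeFinset.card : ℤ)*(G.degree v)) :
    (∃ c : Fin n, ∀ u : Fin n, u ≠ c → G.Adj c u) ∨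
      (∃ w : Fin n, ∀ u u' : Fin n, G.Adj u u' ↔ u ≠ u' ∧ u ≠ w ∧ u' ≠ w) := by
  obtain ⟨b, c, S, M, dd, hb0, hc0, hd1, ht0, hb, hS, hM, hdd, hSd, hMd, hbd, hcd⟩ :=
    zfacts' G hn v h0
  have hdn : G.degree v < n := by simpa using G.degree_lt_card_verts v
  have heq' : S*(dd+((n:ℤ)-1-dd)) + dd*dd*(dd+((n:ℤ)-1-dd))
      = (dd+((n:ℤ)-1-dd)-1)*dd*(dd+((n:ℤ)-1-dd)) + 2*M*dd := by
    rw [hdd, hSd, hMd]; linear_combination heq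
  rcases arith_eq' dd ((n:ℤ)-1-dd) b c S M hd1 ht0 hb0 hc0 hb hS hM heq'
    with h | ⟨hda, hSa⟩ | ⟨hta, hba, hca, hSa⟩
  · left
    refine ⟨v, deg_full_adj' G v ?_⟩
    rw [hdd] at h; omega
  · left
    have hd1' : G.degree v = 1 := by rw [hdd] at hda; exact_mod_cast hda
    have hcard : (G.neighborFinset v).card = 1 := by
      rw [SimpleGraph.card_neighborFinset_eq_degree]; exact hd1'
    obtain ⟨u0, hu0⟩ := Finset.card_eq_one.1 hcard
    refine ⟨u0, deg_full_adj' G u0 ?_⟩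
    have hSu : (∑ u ∈ G.neighborFinset v, G.degree u) = G.degree u0 := by rw [hu0]; simp
    rw [hSd, hSu, hdd, hd1'] at hSa
    omega
  · right
    rw [hdd] at hta hSa
    rw [hSd] at hSa
    rw [hbd] at hba
    rw [hcd] at hca
    have hba' : (∑ u ∈ G.neighborFinset v,
        (G.neighborFinset u ∩ (Finset.univ \ insert v (G.neighborFinset v))).card) = 0 := by
      exact_mod_cast hba
    have hca' : (∑ w ∈ Finset.univ \ insert v (G.neighborFinset v),
        (G.neighborFinset w ∩ (Finset.univ \ insert v (G.neighborFinset v))).card) = 0 := by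
      exact_mod_cast hca
    have hSa' : (∑ u ∈ G.neighborFinset v, G.degree u) = G.degree v * G.degree v := by
      exact_mod_cast hSa
    have htR : (Finset.univ \ insert v (G.neighborFinset v)).card = 1 := by
      rw [cardR' G v]; omega
    obtain ⟨w, hw⟩ := Finset.card_eq_one.1 htR
    -- each neighbour has no edges to R
    have hbN : ∀ u ∈ G.neighborFinset v,
        (G.neighborFinset u ∩ (Finset.univ \ insert v (G.neighborFinset v))).card = 0 :=
      fun u hu => (Finset.sum_eq_zero_iff.1 hba') u hu
    -- w has no neighbours in R nor in N v
    have hwR : w ∈ Finset.univ \ insert v (G.neighborFinset v) := by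
      rw [hw]; exact Finset.mem_singleton_self w
    have hcN : (G.neighborFinset w ∩ (Finset.univ \ insert v (G.neighborFinset v))).card = 0 :=
      (Finset.sum_eq_zero_iff.1 hca') w hwR
    have hNwN : (G.neighborFinset w ∩ G.neighborFinset v).card = 0 := by
      have hdc := dcount' G v
      rw [hba'] at hdc
      exact (Finset.sum_eq_zero_iff.1 hdc.symm) w hwR
    -- w is isolated
    have hNw : G.neighborFinset w = ∅ := by
      rw [Finset.eq_empty_iff_forall_notMem]
      intro x hx
      rcases Finset.mem_sdiff.1 hwR with ⟨-, hwmem⟩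
      by_cases hxv : x = v
      · subst hxv
        refine hwmem (Finset.mem_insert_of_mem ?_)
        rw [SimpleGraph.mem_neighborFinset] at hx ⊢
        exact hx.symm
      by_cases hxN : x ∈ G.neighborFinset v
      · have : x ∈ G.neighborFinset w ∩ G.neighborFinset v := Finset.mem_inter.2 ⟨hx, hxN⟩
        rw [Finset.card_eq_zero] at hNwN
        rw [hNwN] at this
        simp at this
      · have hxR : x ∈ Finset.univ \ insert v (G.neighborFinset v) := by
          simp [hxv, hxN]
        have : x ∈ G.neighborFinset w ∩ (Finset.univ \ insert v (G.neighborFinset v)) :=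
          Finset.mem_inter.2 ⟨hx, hxR⟩
        rw [Finset.card_eq_zero] at hcN
        rw [hcN] at this
        simp at this
    -- each neighbour of v has degree equal to deg v
    have hdegu : ∀ u ∈ G.neighborFinset v, G.degree u = G.degree v := by
      have hle : ∀ u ∈ G.neighborFinset v, G.degree u ≤ G.degree v := by
        intro u hu
        have := deg_nb_le' G v u hu
        rw [hbN u hu] at this
        simpa using this
      have hsum : (∑ u ∈ G.neighborFinset v, G.degree u)
          = ∑ u ∈ G.neighborFinset v, G.degree v := by
        rw [hSa', Finset.sum_const, SimpleGraph.card_neighborFinset_eq_degree, smul_eq_mul]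
      exact fun u hu => (Finset.sum_eq_sum_iff_of_le hle).1 hsum u hu
    have hNu : ∀ u ∈ G.neighborFinset v,
        G.neighborFinset u = insert v ((G.neighborFinset v).erase u) :=
      fun u hu => nb_eq_of_tight' G v u hu (hbN u hu) (hdegu u hu)
    have tri : ∀ x : Fin n, x = v ∨ x ∈ G.neighborFinset v ∨ x = w := by
      intro x
      by_cases hxv : x = v
      · exact Or.inl hxv
      by_cases hxN : x ∈ G.neighborFinset v
      · exact Or.inr (Or.inl hxN)
      · refine Or.inr (Or.inr ?_)
        have : x ∈ Finset.univ \ insert v (G.neighborFinset v) := by simp [hxv, hxN]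
        rw [hw] at this
        exact Finset.mem_singleton.1 this
    have hwnadj : ∀ y, ¬ G.Adj w y := by
      intro y hy
      have : y ∈ G.neighborFinset w := (SimpleGraph.mem_neighborFinset _ _ _).2 hy
      rw [hNw] at this
      simp at this
    refine ⟨w, fun x y => ⟨fun h => ⟨h.ne, ?_, ?_⟩, fun ⟨hxy, hxw, hyw⟩ => ?_⟩⟩
    · rintro rfl; exact hwnadj y h
    · rintro rfl; exact hwnadj x h.symm
    · rcases tri x with rfl | hxN | rfl
      · rcases tri y with rfl | hyN | rfl
        · exact absurd rfl hxy
        · exact (SimpleGraph.mem_neighborFinset _ _ _).1 hyN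
        · exact absurd rfl hyw
      · rcases tri y with rfl | hyN | rfl
        · exact ((SimpleGraph.mem_neighborFinset _ _ _).1 hxN).symm
        · have : y ∈ G.neighborFinset x := by
            rw [hNu x hxN]
            exact Finset.mem_insert_of_mem (Finset.mem_erase.2 ⟨fun hxy' => hxy hxy'.symm, hyN⟩)
          exact (SimpleGraph.mem_neighborFinset _ _ _).1 this
        · exact absurd rfl hyw
      · exact absurd rfl hxw


private lemma div_step (dr S nr M : ℝ) (hd : 0 < dr) (hn : 0 < nr)
    (h : S * nr + dr * dr * nr ≤ (nr - 1) * dr * nr + 2 * M * dr) :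
    dr + S / dr ≤ 2 * M / nr + nr - 1 := by
  have h1 : dr + S / dr = (S + dr * dr) / dr := by field_simp; ring
  have h2 : 2 * M / nr + nr - 1 = ((nr - 1) * nr + 2 * M) / nr := by field_simp; ring
  rw [h1, h2, div_le_div_iff₀ hd hn]
  nlinarith [h]

private lemma div_step_eq (dr S nr M : ℝ) (hd : 0 < dr) (hn : 0 < nr)
    (h : dr + S / dr = 2 * M / nr + nr - 1) :
    S * nr + dr * dr * nr = (nr - 1) * dr * nr + 2 * M * dr := by
  have h1 : dr + S / dr = (S + dr * dr) / dr := by field_simp; ring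
  have h2 : 2 * M / nr + nr - 1 = ((nr - 1) * nr + 2 * M) / nr := by field_simp; ring
  rw [h1, h2, div_eq_div_iff (ne_of_gt hd) (ne_of_gt hn)] at h
  nlinarith [h]

end aux


/-- For a graph of order n ≥ 2 with m edges, max_v (d(v) + m(v)) ≤ 2m/(n-1) + n - 2,
where m(v) is the average degree of the neighbours of v, with equality iff G contains
the star K_{1,n-1} as a spanning subgraph or G = K_{n-1} plus an isolated vertex. -/
theorem degree_avg_degree_bound (n : ℕ) (hn : 2 ≤ n) (G : SimpleGraph (Fin n))
    (dm : Fin n → ℝ)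
    (hdm : ∀ v, dm v = (G.degree v : ℝ) +
      (if G.degree v = 0 then 0
       else (∑ u ∈ G.neighborFinset v, (G.degree u : ℝ)) / (G.degree v : ℝ))) :
    (∀ v, dm v ≤ 2 * (G.edgeFinset.card : ℝ) / ((n : ℝ) - 1) + (n : ℝ) - 2) ∧
      ((∃ v, dm v = 2 * (G.edgeFinset.card : ℝ) / ((n : ℝ) - 1) + (n : ℝ) - 2) ↔
        ((∃ c : Fin n, ∀ u : Fin n, u ≠ c → G.Adj c u) ∨
          (∃ w : Fin n, ∀ u v : Fin n, G.Adj u v ↔ u ≠ v ∧ u ≠ w ∧ v ≠ w))) := by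
  have hnR : (2:ℝ) ≤ (n:ℝ) := by exact_mod_cast hn
  have hn1 : (0:ℝ) < (n:ℝ) - 1 := by linarith
  have hMnn : (0:ℝ) ≤ 2 * (G.edgeFinset.card : ℝ) / ((n:ℝ) - 1) := by positivity
  have hSsum : ∀ v, (∑ u ∈ G.neighborFinset v, (G.degree u : ℝ))
      = ((∑ u ∈ G.neighborFinset v, G.degree u : ℕ) : ℝ) := by intro v; push_cast; ring
  constructor
  · intro v
    rw [hdm v]
    by_cases h0 : G.degree v = 0
    · rw [if_pos h0, h0]
      push_cast
      linarith
    · rw [if_neg h0]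
      have hd0 : (0:ℝ) < (G.degree v : ℝ) := by
        have : 0 < G.degree v := Nat.pos_of_ne_zero h0
        exact_mod_cast this
      have hR : ((∑ u ∈ G.neighborFinset v, G.degree u : ℕ) : ℝ) * ((n:ℝ)-1)
          + (G.degree v : ℝ) * (G.degree v) * ((n:ℝ)-1)
          ≤ ((n:ℝ)-2) * (G.degree v) * ((n:ℝ)-1)
            + 2*(G.edgeFinset.card : ℝ)*(G.degree v) := by exact_mod_cast bound_int' G hn v h0
      have hstep := div_step (G.degree v) ((∑ u ∈ G.neighborFinset v, G.degree u : ℕ) : ℝ)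
        ((n:ℝ)-1) (G.edgeFinset.card : ℝ) hd0 hn1 (by nlinarith [hR])
      rw [hSsum v]
      linarith [hstep]
  · constructor
    · rintro ⟨v, hv⟩
      rw [hdm v] at hv
      by_cases h0 : G.degree v = 0
      · rw [if_pos h0, h0] at hv
        push_cast at hv
        have hfrac0 : 2 * (G.edgeFinset.card : ℝ) / ((n:ℝ) - 1) = 0 := by linarith
        have hn2 : n = 2 := by
          have : (n:ℝ) = 2 := by linarith
          exact_mod_cast this
        have hMc : G.edgeFinset.card = 0 := by
          rcases div_eq_zero_iff.1 hfrac0 with h | h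
          · have : (G.edgeFinset.card : ℝ) = 0 := by linarith
            exact_mod_cast this
          · linarith
        have hnoadj : ∀ x y : Fin n, ¬ G.Adj x y := by
          intro x y hxy
          have hmem : s(x, y) ∈ G.edgeFinset := by
            rw [SimpleGraph.mem_edgeFinset]
            exact hxy
          rw [Finset.card_eq_zero.1 hMc] at hmem
          simp at hmem
        right
        refine ⟨v, fun x y => ⟨fun h => absurd h (hnoadj x y), fun ⟨h1, h2, h3⟩ => ?_⟩⟩
        exfalso
        subst hn2
        have e1 : x.val ≠ y.val := fun hh => h1 (Fin.ext hh)
        have e2 : x.val ≠ v.val := fun hh => h2 (Fin.ext hh)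
        have e3 : y.val ≠ v.val := fun hh => h3 (Fin.ext hh)
        have := x.isLt
        have := y.isLt
        have := v.isLt
        omega
      · rw [if_neg h0, hSsum v] at hv
        have hd0 : (0:ℝ) < (G.degree v : ℝ) := by
          have : 0 < G.degree v := Nat.pos_of_ne_zero h0
          exact_mod_cast this
        have hveq : (G.degree v : ℝ)
            + ((∑ u ∈ G.neighborFinset v, G.degree u : ℕ) : ℝ) / (G.degree v : ℝ)
            = 2 * (G.edgeFinset.card : ℝ) / ((n:ℝ)-1) + ((n:ℝ)-1) - 1 := by
          rw [hv]; ring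
        have hstep := div_step_eq (G.degree v) ((∑ u ∈ G.neighborFinset v, G.degree u : ℕ) : ℝ)
          ((n:ℝ)-1) (G.edgeFinset.card : ℝ) hd0 hn1 hveq
        have hZ : ((∑ u ∈ G.neighborFinset v, G.degree u : ℕ) : ℤ) * ((n:ℤ)-1)
            + (G.degree v : ℤ) * (G.degree v) * ((n:ℤ)-1)
            = ((n:ℤ)-2) * (G.degree v) * ((n:ℤ)-1)
              + 2*(G.edgeFinset.card : ℤ)*(G.degree v) := by
          have hRR : ((∑ u ∈ G.neighborFinset v, G.degree u : ℕ) : ℝ) * ((n:ℝ)-1)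
              + (G.degree v : ℝ) * (G.degree v) * ((n:ℝ)-1)
              = ((n:ℝ)-2) * (G.degree v) * ((n:ℝ)-1)
                + 2*(G.edgeFinset.card : ℝ)*(G.degree v) := by nlinarith [hstep]
          exact_mod_cast hRR
        exact eq_cases' G hn v h0 hZ
    · rintro (⟨c, hc⟩ | ⟨w, hw⟩)
      · -- star case
        have hNc : G.neighborFinset c = Finset.univ.erase c := by
          ext x
          simp only [SimpleGraph.mem_neighborFinset, Finset.mem_erase, Finset.mem_univ, and_true]
          exact ⟨fun h => h.ne', fun h => hc x h⟩
        have hdc : G.degree c = n - 1 := by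
          rw [← SimpleGraph.card_neighborFinset_eq_degree, hNc,
            Finset.card_erase_of_mem (Finset.mem_univ _)]
          simp
        have hdc0 : G.degree c ≠ 0 := by omega
        have hsum : G.degree c + (∑ u ∈ G.neighborFinset c, G.degree u)
            = 2 * G.edgeFinset.card := by
          rw [← G.sum_degrees_eq_twice_card_edges, hNc]
          exact Finset.add_sum_erase Finset.univ (fun x => G.degree x) (Finset.mem_univ c)
        refine ⟨c, ?_⟩
        rw [hdm c, if_neg hdc0, hSsum c]
        have hdcR : (G.degree c : ℝ) = (n:ℝ) - 1 := by
          rw [hdc, Nat.cast_sub (by omega : 1 ≤ n), Nat.cast_one]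
        have hsumR : (G.degree c : ℝ) + ((∑ u ∈ G.neighborFinset c, G.degree u : ℕ) : ℝ)
            = 2 * (G.edgeFinset.card : ℝ) := by exact_mod_cast hsum
        rw [hdcR] at hsumR ⊢
        rw [show ((∑ u ∈ G.neighborFinset c, G.degree u : ℕ) : ℝ)
          = 2 * (G.edgeFinset.card : ℝ) - ((n:ℝ) - 1) from by linarith]
        field_simp
        ring
      · -- K_{n-1} plus isolated vertex
        by_cases hn2 : n = 2
        · subst hn2
          have hnoadj : ∀ x y : Fin 2, ¬ G.Adj x y := by
            intro x y hxy
            rw [hw x y] at hxy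
            obtain ⟨h1, h2, h3⟩ := hxy
            have e1 : x.val ≠ y.val := fun hh => h1 (Fin.ext hh)
            have e2 : x.val ≠ w.val := fun hh => h2 (Fin.ext hh)
            have e3 : y.val ≠ w.val := fun hh => h3 (Fin.ext hh)
            have := x.isLt
            have := y.isLt
            have := w.isLt
            omega
          have hdeg0 : G.degree w = 0 := by
            rw [← SimpleGraph.card_neighborFinset_eq_degree, Finset.card_eq_zero,
              Finset.eq_empty_iff_forall_notMem]
            intro y hy
            exact hnoadj w y ((SimpleGraph.mem_neighborFinset _ _ _).1 hy)
          have hM0 : G.edgeFinset.card = 0 := by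
            rw [Finset.card_eq_zero, Finset.eq_empty_iff_forall_notMem]
            intro e he
            rw [SimpleGraph.mem_edgeFinset] at he
            revert he
            refine Sym2.ind (fun x y he => ?_) e
            exact hnoadj x y he
          refine ⟨w, ?_⟩
          rw [hdm w, if_pos hdeg0, hdeg0, hM0]
          norm_num
        · have hn3 : 3 ≤ n := by omega
          obtain ⟨v, hvw⟩ : ∃ v : Fin n, v ≠ w := by
            refine ⟨if h : w = ⟨0, by omega⟩ then ⟨1, by omega⟩ else ⟨0, by omega⟩, ?_⟩
            split_ifs with h
            · rw [h]
              simp [Fin.ext_iff]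
            · exact fun hh => h hh.symm
          have huwN : ∀ x u : Fin n, u ∈ G.neighborFinset x → u ≠ w := by
            intro x u hu
            rw [SimpleGraph.mem_neighborFinset, hw x u] at hu
            exact hu.2.2
          have hNdeg : ∀ u : Fin n, u ≠ w → G.neighborFinset u = Finset.univ \ {u, w} := by
            intro u hu
            ext x
            simp only [SimpleGraph.mem_neighborFinset, Finset.mem_sdiff, Finset.mem_univ, true_and,
              Finset.mem_insert, Finset.mem_singleton, hw u x]
            constructor
            · rintro ⟨h1, h2, h3⟩
              push_neg
              exact ⟨fun hh => h1 hh.symm, h3⟩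
            · intro hx
              push_neg at hx
              exact ⟨fun hh => hx.1 hh.symm, hu, hx.2⟩
          have hdeg : ∀ u : Fin n, u ≠ w → G.degree u = n - 2 := by
            intro u hu
            rw [← SimpleGraph.card_neighborFinset_eq_degree, hNdeg u hu,
              Finset.card_sdiff_of_subset (Finset.subset_univ _),
              Finset.card_insert_of_notMem (by simp [hu]), Finset.card_singleton]
            simp
          have hdegw : G.degree w = 0 := by
            rw [← SimpleGraph.card_neighborFinset_eq_degree, Finset.card_eq_zero,
              Finset.eq_empty_iff_forall_notMem]
            intro x hx
            rw [SimpleGraph.mem_neighborFinset, hw w x] at hx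
            exact hx.2.1 rfl
          have h2M : 2 * G.edgeFinset.card = (n - 1) * (n - 2) := by
            rw [← G.sum_degrees_eq_twice_card_edges,
              ← Finset.add_sum_erase Finset.univ (fun x => G.degree x) (Finset.mem_univ w)]
            rw [Finset.sum_congr rfl (fun x hx => hdeg x (Finset.mem_erase.1 hx).1),
              Finset.sum_const, Finset.card_erase_of_mem (Finset.mem_univ _), smul_eq_mul]
            simp [hdegw]
          have hdegv : G.degree v = n - 2 := hdeg v hvw
          have hdv0 : G.degree v ≠ 0 := by omega
          have hSv : (∑ u ∈ G.neighborFinset v, G.degree u) = (n-2) * (n-2) := by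
            rw [Finset.sum_congr rfl (fun u hu => hdeg u (huwN v u hu)),
              Finset.sum_const, SimpleGraph.card_neighborFinset_eq_degree, hdegv, smul_eq_mul]
          refine ⟨v, ?_⟩
          rw [hdm v, if_neg hdv0, hSsum v, hSv]
          have c1 : (G.degree v : ℝ) = (n:ℝ) - 2 := by
            rw [hdegv, Nat.cast_sub hn]
            norm_num
          have c2 : (((n-2) * (n-2) : ℕ) : ℝ) = ((n:ℝ)-2) * ((n:ℝ)-2) := by
            push_cast [Nat.cast_sub hn]
            ring
          have c3 : 2 * (G.edgeFinset.card : ℝ) = ((n:ℝ)-1) * ((n:ℝ)-2) := by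
            have h := congrArg (Nat.cast : ℕ → ℝ) h2M
            push_cast [Nat.cast_sub hn, Nat.cast_sub (by omega : 1 ≤ n)] at h
            linarith
          rw [c1, c2, c3]
          have hn2R : (0:ℝ) < (n:ℝ) - 2 := by
            have : (3:ℝ) ≤ (n:ℝ) := by exact_mod_cast hn3
            linarith
          field_simp
          ring
end

section
/- For any graph G (not necessarily connected), the signless Laplacian spectral radius satisfies γ(G) ≤ max over vertices v of (d(v) + m(v)). -/
/-!
Rescale an eigenvector `f` of `Q(G)` by the degrees and look at a vertex `v` maximising
`|f v| / d(v)`. The eigen-equation `γ f(v) = d(v) f(v) + ∑_{u ~ v} f(u)` and `|f u| ≤ d(u) |f v| / d(v)`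
give `γ d(v) ≤ d(v)² + ∑_{u ~ v} d(u)`, i.e. `γ ≤ d(v) + m(v)`: this is the row-sum bound for
`D⁻¹ Q D`. Isolated vertices do no harm, since an eigenvector of a positive eigenvalue vanishes there.
-/

open scoped Classical

open Finset Matrix

theorem Matrix.exists_abs_mul_le_sum_abs_mul_of_mulVec_eq_smul {K V : Type*} [Field K]
    [LinearOrder K] [IsStrictOrderedRing K] [Fintype V] {M : Matrix V V K} {f w : V → K} {μ : K}
    (hf : f ≠ 0) (hMf : M *ᵥ f = μ • f) (hw : 0 ≤ w) (hsupp : ∀ v, w v = 0 → f v = 0) :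
    ∃ v, 0 < w v ∧ |μ| * w v ≤ ∑ u, |M v u| * w u := by
  obtain ⟨u₀, hu₀⟩ := Function.ne_iff.mp hf
  have hwu₀ : 0 < w u₀ := (hw u₀).lt_of_ne fun h ↦ hu₀ (hsupp u₀ h.symm)
  obtain ⟨v, -, hv⟩ := exists_max_image univ (fun u ↦ |f u| / w u) ⟨u₀, mem_univ _⟩
  set c := |f v| / w v
  have hc : 0 < c := (div_pos (abs_pos.2 hu₀) hwu₀).trans_le (hv u₀ (mem_univ _))
  have hwv : 0 < w v := (hw v).lt_of_ne fun h ↦ by simp [c, ← h] at hc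
  have hfu : ∀ u, |f u| ≤ c * w u := by
    intro u
    rcases (hw u).eq_or_lt with h | h
    · simp [hsupp u h.symm, ← h]
    · exact (div_le_iff₀ h).1 (hv u (mem_univ _))
  refine ⟨v, hwv, le_of_mul_le_mul_left ?_ hc⟩
  calc c * (|μ| * w v) = |(M *ᵥ f) v| := by
        rw [hMf, Pi.smul_apply, smul_eq_mul, abs_mul, ← div_mul_cancel₀ |f v| hwv.ne']; ring
    _ ≤ ∑ u, |M v u| * |f u| := by
        simp only [← abs_mul]
        exact abs_sum_le_sum_abs _ _
    _ ≤ ∑ u, |M v u| * (c * w u) := by gcongr with u; exact hfu u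
    _ = c * ∑ u, |M v u| * w u := by rw [mul_sum]; congr! 1 with u; ring

namespace SimpleGraph

variable {V : Type*} [Fintype V] (G : SimpleGraph V) [DecidableRel G.Adj]

noncomputable def avgNeighborDegree (v : V) : ℝ :=
  if G.degree v = 0 then 0 else (∑ u ∈ G.neighborFinset v, (G.degree u : ℝ)) / G.degree v

theorem avgNeighborDegree_nonneg (v : V) : 0 ≤ G.avgNeighborDegree v := by
  unfold avgNeighborDegree
  split_ifs <;> positivity

theorem degree_mul_avgNeighborDegree (v : V) :
    G.degree v * G.avgNeighborDegree v = ∑ u ∈ G.neighborFinset v, (G.degree u : ℝ) := by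
  unfold avgNeighborDegree
  split_ifs with h
  · simp [card_eq_zero.mp (h : (G.neighborFinset v).card = 0)]
  · field_simp

variable [DecidableEq V]

def signlessLapMatrix (R : Type*) [AddMonoidWithOne R] : Matrix V V R :=
  G.degMatrix R + G.adjMatrix R

theorem signlessLapMatrix_mulVec_apply {R : Type*} [NonAssocSemiring R] (v : V) (vec : V → R) :
    (G.signlessLapMatrix R *ᵥ vec) v = G.degree v * vec v + ∑ u ∈ G.neighborFinset v, vec u := by
  rw [signlessLapMatrix, add_mulVec, Pi.add_apply, degMatrix_mulVec_apply, adjMatrix_mulVec_apply]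

theorem signlessLapMatrix_nonneg {R : Type*} [Semiring R] [PartialOrder R] [IsOrderedRing R]
    (v u : V) : 0 ≤ G.signlessLapMatrix R v u := by
  refine add_nonneg ?_ ?_
  · rw [degMatrix, diagonal_apply]
    split_ifs <;> positivity
  · rw [adjMatrix_apply]
    split_ifs
    exacts [zero_le_one, le_rfl]

theorem sum_abs_signlessLapMatrix_mul_degree (v : V) :
    ∑ u, |G.signlessLapMatrix ℝ v u| * G.degree u =
      G.degree v * (G.degree v + G.avgNeighborDegree v) := by
  simp_rw [abs_of_nonneg (G.signlessLapMatrix_nonneg (R := ℝ) _ _)]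
  rw [mul_add, degree_mul_avgNeighborDegree]
  exact G.signlessLapMatrix_mulVec_apply v (fun u ↦ (G.degree u : ℝ))

theorem apply_eq_zero_of_degree_eq_zero_of_signlessLapMatrix_mulVec_eq_smul {f : V → ℝ} {μ : ℝ}
    (hμ : μ ≠ 0) (hf : G.signlessLapMatrix ℝ *ᵥ f = μ • f) {v : V} (hv : G.degree v = 0) :
    f v = 0 := by
  have h := congrFun hf v
  rw [signlessLapMatrix_mulVec_apply, hv, card_eq_zero.mp (hv : (G.neighborFinset v).card = 0)]
    at h
  simpa [hμ] using h.symm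

theorem exists_eigenvalue_le_degree_add_avgNeighborDegree {f : V → ℝ} {μ : ℝ} (hf0 : f ≠ 0)
    (hf : G.signlessLapMatrix ℝ *ᵥ f = μ • f) :
    ∃ v, μ ≤ G.degree v + G.avgNeighborDegree v := by
  rcases le_or_gt μ 0 with hμ | hμ
  · obtain ⟨v, -⟩ := Function.ne_iff.mp hf0
    exact ⟨v, hμ.trans (add_nonneg (Nat.cast_nonneg _) (G.avgNeighborDegree_nonneg v))⟩
  obtain ⟨v, hv, hle⟩ := exists_abs_mul_le_sum_abs_mul_of_mulVec_eq_smul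
    (w := fun u ↦ (G.degree u : ℝ)) hf0 hf (fun u ↦ Nat.cast_nonneg _) fun u hu ↦
      G.apply_eq_zero_of_degree_eq_zero_of_signlessLapMatrix_mulVec_eq_smul hμ.ne' hf
        (by exact_mod_cast hu)
  rw [sum_abs_signlessLapMatrix_mul_degree, abs_of_pos hμ, mul_comm] at hle
  exact ⟨v, le_of_mul_le_mul_left hle hv⟩

end SimpleGraph

/-- For any graph G, the signless Laplacian spectral radius satisfies
γ(G) ≤ max_v (d(v) + m(v)), where m(v) is the average degree of the neighbours of v. -/
theorem signless_laplacian_radius_le_max {V : Type*} [Fintype V] (G : SimpleGraph V) (γ : ℝ)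
    (hγ : IsGreatest {x : ℝ | ∃ f : V → ℝ, f ≠ 0 ∧
      (Matrix.diagonal (fun v => (G.degree v : ℝ)) + G.adjMatrix ℝ).mulVec f = x • f} γ) :
    ∃ v : V, γ ≤ (G.degree v : ℝ) +
      (if G.degree v = 0 then 0
       else (∑ u ∈ G.neighborFinset v, (G.degree u : ℝ)) / (G.degree v : ℝ)) := by
  obtain ⟨f, hf0, hf⟩ := hγ.1
  exact G.exists_eigenvalue_le_degree_add_avgNeighborDegree hf0 hf
end

section
/- Let r ≥ 2 and s be integers with 2(r-1)^2 ≤ s < (2r-1)(r-1), and let G = (K_r ⊕ K_r) ∨ K_s be the graph of order n = 2r + s. Then μ(G) < n - 2 while γ(G) ≥ 2(n-2). -/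
/-!
If `A v = x v`, then `(x + 1) v` is constant on each of the three cliques and is determined by the
three block sums of `v`. These sums solve a `3 × 3` linear system with determinant
`(x + 1 - r) ((x + 1 - r) (x + 1 - s) - 2rs)`, so unless all block sums vanish (forcing `x = -1`),
`x` is `r - 1` or a root of `f`; and `f` is positive from `n - 2` on because `s < (2r - 1)(r - 1)`.
For the signless Laplacian, a vector constant on the blocks built from the largest root of `g` is an
eigenvector, and that root is at least `2(n - 2)` exactly when `s ≥ 2(r - 1)²`.
-/

open scoped Classical

/-- The join of two simple graphs: their disjoint union together with all edges
between the two parts. -/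
def SimpleGraph.join {α β : Type*} (G : SimpleGraph α) (H : SimpleGraph β) :
    SimpleGraph (α ⊕ β) where
  Adj x y := (G.sum H).Adj x y ∨ (x.isLeft ∧ y.isRight) ∨ (x.isRight ∧ y.isLeft)
  symm := by
    constructor
    rintro x y (h | ⟨h1, h2⟩ | ⟨h1, h2⟩)
    · exact Or.inl ((G.sum H).symm.symm _ _ h)
    · exact Or.inr (Or.inr ⟨h2, h1⟩)
    · exact Or.inr (Or.inl ⟨h2, h1⟩)
  loopless := by
    constructor
    rintro x (h | ⟨h1, h2⟩ | ⟨h1, h2⟩)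
    · exact (G.sum H).loopless.irrefl x h
    · cases x <;> simp_all
    · cases x <;> simp_all

/-- The graph (K_r ⊕ K_r) ∨ K_s. -/
def exGraph (r s : ℕ) : SimpleGraph ((Fin r ⊕ Fin r) ⊕ Fin s) :=
  SimpleGraph.join ((SimpleGraph.completeGraph (Fin r)).sum (SimpleGraph.completeGraph (Fin r)))
    (SimpleGraph.completeGraph (Fin s))

open Sum Matrix

namespace SimpleGraph

variable {α β R : Type*} [Fintype α] [Fintype β]

theorem adjMatrix_sum_mulVec_inl [NonAssocSemiring R] (G : SimpleGraph α) (H : SimpleGraph β)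
    [DecidableRel G.Adj] [DecidableRel H.Adj] (f : α ⊕ β → R) (a : α) :
    ((G.sum H).adjMatrix R *ᵥ f) (inl a) = (G.adjMatrix R *ᵥ (f ∘ inl)) a := by
  simp [mulVec, dotProduct, Fintype.sum_sum_type]
  congr!

theorem adjMatrix_sum_mulVec_inr [NonAssocSemiring R] (G : SimpleGraph α) (H : SimpleGraph β)
    [DecidableRel G.Adj] [DecidableRel H.Adj] (f : α ⊕ β → R) (b : β) :
    ((G.sum H).adjMatrix R *ᵥ f) (inr b) = (H.adjMatrix R *ᵥ (f ∘ inr)) b := by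
  simp [mulVec, dotProduct, Fintype.sum_sum_type]
  congr!

theorem adjMatrix_join_mulVec_inl [NonAssocSemiring R] (G : SimpleGraph α) (H : SimpleGraph β)
    [DecidableRel G.Adj] [DecidableRel H.Adj] (f : α ⊕ β → R) (a : α) :
    ((G.join H).adjMatrix R *ᵥ f) (inl a) = (G.adjMatrix R *ᵥ (f ∘ inl)) a + ∑ b, f (inr b) := by
  simp [mulVec, dotProduct, Fintype.sum_sum_type, join]

theorem adjMatrix_join_mulVec_inr [NonAssocSemiring R] (G : SimpleGraph α) (H : SimpleGraph β)
    [DecidableRel G.Adj] [DecidableRel H.Adj] (f : α ⊕ β → R) (b : β) :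
    ((G.join H).adjMatrix R *ᵥ f) (inr b) = ∑ a, f (inl a) + (H.adjMatrix R *ᵥ (f ∘ inr)) b := by
  simp [mulVec, dotProduct, Fintype.sum_sum_type, join]

theorem adjMatrix_completeGraph_mulVec_apply [NonAssocRing R] [DecidableEq α] (f : α → R) (a : α) :
    ((completeGraph α).adjMatrix R *ᵥ f) a = ∑ b, f b - f a := by
  simp only [adjMatrix_mulVec_apply, completeGraph_eq_top, neighborFinset_top, eq_sub_iff_add_eq]
  simpa using Finset.sum_compl_add_sum {a} f

theorem natCast_degree_eq_adjMatrix_mulVec_one [NonAssocSemiring R] (G : SimpleGraph α) (v : α) :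
    (G.degree v : R) = (G.adjMatrix R *ᵥ 1) v := by
  simp

end SimpleGraph

section exGraph

variable {r s : ℕ}

theorem exGraph_adjMatrix_mulVec_inl_inl (f : (Fin r ⊕ Fin r) ⊕ Fin s → ℝ) (i : Fin r) :
    ((exGraph r s).adjMatrix ℝ *ᵥ f) (inl (inl i)) =
      ∑ j, f (inl (inl j)) + ∑ k, f (inr k) - f (inl (inl i)) := by
  rw [exGraph, SimpleGraph.adjMatrix_join_mulVec_inl, SimpleGraph.adjMatrix_sum_mulVec_inl,
    SimpleGraph.adjMatrix_completeGraph_mulVec_apply]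
  simp only [Function.comp_apply]
  ring

theorem exGraph_adjMatrix_mulVec_inl_inr (f : (Fin r ⊕ Fin r) ⊕ Fin s → ℝ) (i : Fin r) :
    ((exGraph r s).adjMatrix ℝ *ᵥ f) (inl (inr i)) =
      ∑ j, f (inl (inr j)) + ∑ k, f (inr k) - f (inl (inr i)) := by
  rw [exGraph, SimpleGraph.adjMatrix_join_mulVec_inl, SimpleGraph.adjMatrix_sum_mulVec_inr,
    SimpleGraph.adjMatrix_completeGraph_mulVec_apply]
  simp only [Function.comp_apply]
  ring

theorem exGraph_adjMatrix_mulVec_inr (f : (Fin r ⊕ Fin r) ⊕ Fin s → ℝ) (k : Fin s) :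
    ((exGraph r s).adjMatrix ℝ *ᵥ f) (inr k) =
      ∑ j, f (inl (inl j)) + ∑ j, f (inl (inr j)) + ∑ k, f (inr k) - f (inr k) := by
  rw [exGraph, SimpleGraph.adjMatrix_join_mulVec_inr, Fintype.sum_sum_type,
    SimpleGraph.adjMatrix_completeGraph_mulVec_apply]
  simp only [Function.comp_apply]
  ring

theorem exGraph_adjMatrix_eigenvalue_root {x : ℝ} {f : (Fin r ⊕ Fin r) ⊕ Fin s → ℝ} (hf : f ≠ 0)
    (hx : (exGraph r s).adjMatrix ℝ *ᵥ f = x • f) :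
    (x + 1) * (x - (r - 1)) * ((x - (r - 1)) * (x - (s - 1)) - 2 * r * s) = 0 := by
  set S₁ := ∑ j, f (inl (inl j))
  set S₂ := ∑ j, f (inl (inr j))
  set S₃ := ∑ k, f (inr k)
  have h₁ (i : Fin r) : (x + 1) * f (inl (inl i)) = S₁ + S₃ := by
    have := congrFun hx (inl (inl i))
    rw [exGraph_adjMatrix_mulVec_inl_inl] at this
    simp only [Pi.smul_apply, smul_eq_mul] at this
    linarith
  have h₂ (i : Fin r) : (x + 1) * f (inl (inr i)) = S₂ + S₃ := by
    have := congrFun hx (inl (inr i))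
    rw [exGraph_adjMatrix_mulVec_inl_inr] at this
    simp only [Pi.smul_apply, smul_eq_mul] at this
    linarith
  have h₃ (k : Fin s) : (x + 1) * f (inr k) = S₁ + S₂ + S₃ := by
    have := congrFun hx (inr k)
    rw [exGraph_adjMatrix_mulVec_inr] at this
    simp only [Pi.smul_apply, smul_eq_mul] at this
    linarith
  have e₁ : (x + 1) * S₁ = r * (S₁ + S₃) := by
    rw [Finset.mul_sum, Finset.sum_congr rfl fun i _ => h₁ i]
    simp only [Finset.sum_const, Finset.card_univ, Fintype.card_fin, nsmul_eq_mul]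
  have e₂ : (x + 1) * S₂ = r * (S₂ + S₃) := by
    rw [Finset.mul_sum, Finset.sum_congr rfl fun i _ => h₂ i]
    simp only [Finset.sum_const, Finset.card_univ, Fintype.card_fin, nsmul_eq_mul]
  have e₃ : (x + 1) * S₃ = s * (S₁ + S₂ + S₃) := by
    rw [Finset.mul_sum, Finset.sum_congr rfl fun i _ => h₃ i]
    simp only [Finset.sum_const, Finset.card_univ, Fintype.card_fin, nsmul_eq_mul]
  set t := x + 1
  set D := (t - r) * ((t - r) * (t - s) - 2 * r * s)
  -- `D` is the determinant of the linear system `e₁, e₂, e₃`; the coefficients are its adjugate.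
  have hD₁ : D * S₁ = 0 := by
    linear_combination ((t - r) * (t - s) - r * s) * e₁ + r * s * e₂ + r * (t - r) * e₃
  have hD₂ : D * S₂ = 0 := by
    linear_combination r * s * e₁ + ((t - r) * (t - s) - r * s) * e₂ + r * (t - r) * e₃
  have hD₃ : D * S₃ = 0 := by
    linear_combination s * (t - r) * e₁ + s * (t - r) * e₂ + (t - r) ^ 2 * e₃
  obtain ⟨v, hv⟩ := Function.ne_iff.mp hf
  have htD : t * D * f v = 0 := by
    rcases v with (i | i) | k
    · linear_combination D * h₁ i + hD₁ + hD₃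
    · linear_combination D * h₂ i + hD₂ + hD₃
    · linear_combination D * h₃ k + hD₁ + hD₂ + hD₃
  linear_combination (mul_eq_zero.mp htD).resolve_right hv

-- The block values `(s, x - (2r + s - 2))` form an eigenvector of the quotient matrix
-- `[[2r + s - 2, s], [2r, 2r + 2s - 2]]` of the signless Laplacian.
theorem exGraph_signlessLaplacian_hasEigenvector (hr : 0 < r) (hs : 0 < s) {x : ℝ}
    (hx : (x - (2 * r + s - 2)) * (x - (2 * r + 2 * s - 2)) = 2 * r * s) :
    ∃ f : (Fin r ⊕ Fin r) ⊕ Fin s → ℝ, f ≠ 0 ∧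
      (diagonal (fun v => ((exGraph r s).degree v : ℝ)) + (exGraph r s).adjMatrix ℝ) *ᵥ f =
        x • f := by
  refine ⟨Sum.elim (fun _ => (s : ℝ)) (fun _ => x - (2 * r + s - 2)), ?_, ?_⟩
  · intro h
    have := congrFun h (inl (inl ⟨0, hr⟩))
    simp only [elim_inl, Pi.zero_apply, Nat.cast_eq_zero] at this
    omega
  · ext v
    simp only [add_mulVec, mulVec_diagonal, Pi.add_apply, Pi.smul_apply, smul_eq_mul,
      SimpleGraph.natCast_degree_eq_adjMatrix_mulVec_one]
    rcases v with (i | i) | k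
    · simp only [exGraph_adjMatrix_mulVec_inl_inl, Pi.one_apply, elim_inl, elim_inr,
        Finset.sum_const, Finset.card_univ, Fintype.card_fin, nsmul_eq_mul]
      ring
    · simp only [exGraph_adjMatrix_mulVec_inl_inr, Pi.one_apply, elim_inl, elim_inr,
        Finset.sum_const, Finset.card_univ, Fintype.card_fin, nsmul_eq_mul]
      ring
    · simp only [exGraph_adjMatrix_mulVec_inr, Pi.one_apply, elim_inl, elim_inr,
        Finset.sum_const, Finset.card_univ, Fintype.card_fin, nsmul_eq_mul]
      linear_combination -hx

end exGraph

/-- For r ≥ 2 and 2(r-1)² ≤ s < (2r-1)(r-1), the graph G = (K_r ⊕ K_r) ∨ K_s of order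
n = 2r + s satisfies μ(G) < n - 2 while γ(G) ≥ 2(n-2). -/
theorem exGraph_spectral (r s : ℕ) (hr : 2 ≤ r)
    (hs1 : 2 * (r - 1) ^ 2 ≤ s) (hs2 : s < (2 * r - 1) * (r - 1)) (μ γ : ℝ)
    (hμ : IsGreatest {x : ℝ | ∃ f : (Fin r ⊕ Fin r) ⊕ Fin s → ℝ, f ≠ 0 ∧
      ((exGraph r s).adjMatrix ℝ).mulVec f = x • f} μ)
    (hγ : IsGreatest {x : ℝ | ∃ f : (Fin r ⊕ Fin r) ⊕ Fin s → ℝ, f ≠ 0 ∧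
      (Matrix.diagonal (fun v => ((exGraph r s).degree v : ℝ)) +
        (exGraph r s).adjMatrix ℝ).mulVec f = x • f} γ) :
    μ < (2 * r + s : ℝ) - 2 ∧ 2 * ((2 * r + s : ℝ) - 2) ≤ γ := by
  have hr' : (2 : ℝ) ≤ r := by exact_mod_cast hr
  have hs1' : 2 * ((r : ℝ) - 1) ^ 2 ≤ s := by
    have := (Nat.cast_le (α := ℝ)).2 hs1
    push_cast [Nat.cast_sub (by omega : 1 ≤ r)] at this
    exact this
  have hs2' : (s : ℝ) < (2 * r - 1) * (r - 1) := by
    have := (Nat.cast_lt (α := ℝ)).2 hs2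
    push_cast [Nat.cast_sub (by omega : 1 ≤ r), Nat.cast_sub (by omega : 1 ≤ 2 * r)] at this
    exact this
  constructor
  · obtain ⟨f, hf, hμf⟩ := hμ.1
    by_contra! hμ_ge
    have hquad : 2 * r * s < (μ - (r - 1)) * (μ - (s - 1)) := by
      nlinarith [mul_le_mul (by linarith : (r : ℝ) + s - 1 ≤ μ - (r - 1))
        (by linarith : 2 * (r : ℝ) - 1 ≤ μ - (s - 1)) (by linarith) (by linarith)]
    have hpos : 0 < (μ + 1) * (μ - (r - 1)) * ((μ - (r - 1)) * (μ - (s - 1)) - 2 * r * s) :=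
      mul_pos (mul_pos (by linarith) (by linarith)) (sub_pos.mpr hquad)
    exact hpos.ne' (exGraph_adjMatrix_eigenvalue_root hf hμf)
  · set q := √((s : ℝ) ^ 2 + 8 * r * s)
    have hq : q ^ 2 = (s : ℝ) ^ 2 + 8 * r * s := Real.sq_sqrt (by positivity)
    have hroot : ((4 * r + 3 * s - 4 + q) / 2 - (2 * r + s - 2)) *
        ((4 * r + 3 * s - 4 + q) / 2 - (2 * r + 2 * s - 2)) = 2 * r * s := by
      linear_combination hq / 4
    have hγ_ge := hγ.2 (exGraph_signlessLaplacian_hasEigenvector (by omega)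
      (by exact_mod_cast (by nlinarith : (0 : ℝ) < s)) hroot)
    have hq_ge : 4 * r + s - 4 ≤ q := Real.le_sqrt_of_sq_le (by nlinarith)
    linarith
end
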